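/- arXiv:1707.02716 — 2 statements merged into one kernel-verified Lean document; each statement's English description precedes it below -/
import Mathlib

section
/- Under (H1)–(H4), define for each φ ∈ C(M,ℝ^m) and t ≥ 0 the operator T⁻_t φ(x) = u(x,t), where u is the variational solution of (S) with initial datum φ. Then the family {T⁻_t}_{t≥0} is a semigroup: for all t, s ≥ 0 and all φ ∈ C(M,ℝ^m), T⁻_{t+s} φ = T⁻_t (T⁻_s φ). -/
open MeasureTheory Set Filter Topology
open scoped RealInnerProductSpace

noncomputable section

/-- Euclidean space `ℝ^N`. -/
abbrev Vec (N : ℕ) := EuclideanSpace ℝ (Fin N)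

/-- A function on `ℝ^N` is `ℤ^N`-periodic iff it descends to the flat torus
`𝕋^N = ℝ^N/ℤ^N`.  Functions on the torus `M = 𝕋^N` are encoded throughout as
`ℤ^N`-periodic functions on `ℝ^N`. -/
def intVec {N : ℕ} (k : Fin N → ℤ) : Vec N := WithLp.toLp 2 (fun i => (k i : ℝ))

def ZPeriodic {N : ℕ} {α : Type*} (f : Vec N → α) : Prop :=
  ∀ (x : Vec N) (k : Fin N → ℤ), f (x + intVec k) = f x

/-- The distance on the torus `𝕋^N` induced by the Euclidean metric on `ℝ^N`. -/
def tdist {N : ℕ} (x y : Vec N) : ℝ :=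
  ⨅ k : Fin N → ℤ, ‖x - y + intVec k‖

/-- An absolutely continuous curve on `[a,b]` with values in `ℝ^N`, encoded as a
function together with an integrable a.e. derivative of which it is the primitive. -/
structure ACCurve (N : ℕ) (a b : ℝ) where
  toFun : ℝ → Vec N
  deriv : ℝ → Vec N
  integrable : IntervalIntegrable deriv volume a b
  represents : ∀ t ∈ Icc a b, toFun t = toFun a + ∫ s in a..t, deriv s

/-- A family of Hamiltonians `H_i : T*M × ℝ^m → ℝ` satisfying (H1)-(H4). -/
structure HamHyp (N m : ℕ) where
  /-- the Hamiltonians `H i x p u` -/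
  H : Fin m → Vec N → Vec N → (Fin m → ℝ) → ℝ
  /-- The Lipschitz constants in (H4) -/
  Θ : Fin m → ℝ
  Θ_pos : ∀ i, 0 < Θ i
  /-- `H i` is a function on the torus in the `x` variable -/
  periodic : ∀ i p u, ZPeriodic fun x => H i x p u
  /-- (H1): `C²` regularity in `(x,p,u)` -/
  h1 : ∀ i, ContDiff ℝ 2 fun q : Vec N × Vec N × (Fin m → ℝ) => H i q.1 q.2.1 q.2.2
  /-- (H2): strict convexity in `p` -/
  h2 : ∀ i x u, StrictConvexOn ℝ univ fun p => H i x p u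
  /-- (H3): superlinearity in `p` -/
  h3 : ∀ i x u, Tendsto (fun p : Vec N => H i x p u / ‖p‖) (cocompact (Vec N)) atTop
  /-- (H4): uniform Lipschitz continuity in `u` (sup-norm on `ℝ^m`) -/
  h4 : ∀ i x p u v, |H i x p u - H i x p v| ≤ Θ i * ‖u - v‖

namespace HamHyp

variable {N m : ℕ}

/-- The Lagrangian `L_i`, convex dual of `H_i`. -/
def L (D : HamHyp N m) (i : Fin m) (x v : Vec N) (u : Fin m → ℝ) : ℝ :=
  ⨆ p : Vec N, (⟪p, v⟫ - D.H i x p u)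

/-- `Θ = max_i Θ_i`. -/
def Θmax (D : HamHyp N m) : ℝ := ⨆ i, D.Θ i

end HamHyp

/-- The set of values of the action functional `φ_i(γ(0)) + ∫₀ᵗ L_i(γ,γ',u(γ,·))`
over absolutely continuous curves `γ : [0,t] → M` with `γ(t) = x`. -/
def candidates {N m : ℕ} (D : HamHyp N m) (φ : Fin m → Vec N → ℝ)
    (u : Fin m → Vec N → ℝ → ℝ) (i : Fin m) (x : Vec N) (t : ℝ) : Set ℝ :=
  { A : ℝ | ∃ γ : ACCurve N 0 t, γ.toFun t = x ∧
      IntervalIntegrable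
        (fun s => D.L i (γ.toFun s) (γ.deriv s) fun j => u j (γ.toFun s) s) volume 0 t ∧
      A = φ i (γ.toFun 0) +
        ∫ s in (0:ℝ)..t, D.L i (γ.toFun s) (γ.deriv s) fun j => u j (γ.toFun s) s }

/-- The operator `𝔸_{φ,T}` (the pointwise formula does not involve `T`). -/
def Aop {N m : ℕ} (D : HamHyp N m) (φ : Fin m → Vec N → ℝ)
    (u : Fin m → Vec N → ℝ → ℝ) : Fin m → Vec N → ℝ → ℝ :=
  fun i x t => sInf (candidates D φ u i x t)

/-- Variational solution of the weakly coupled system (S). -/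
def IsVariationalSolution {N m : ℕ} (D : HamHyp N m) (φ : Fin m → Vec N → ℝ)
    (u : Fin m → Vec N → ℝ → ℝ) : Prop :=
  ContinuousOn (fun q : Vec N × ℝ => fun i => u i q.1 q.2) (univ ×ˢ Ici 0) ∧
  (∀ i t, ZPeriodic fun x => u i x t) ∧
  ∀ i x t, 0 ≤ t → u i x t = sInf (candidates D φ u i x t)

/-- Viscosity subsolution of the weakly coupled system (S). -/
def IsViscositySubsolution {N m : ℕ} (D : HamHyp N m) (φ : Fin m → Vec N → ℝ)
    (u : Fin m → Vec N → ℝ → ℝ) : Prop :=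
  (∀ i x, u i x 0 ≤ φ i x) ∧
  ∀ (i : Fin m) (x : Vec N) (t : ℝ), 0 < t → ∀ ψ : Vec N × ℝ → ℝ,
    ContDiffAt ℝ 1 ψ (x, t) →
    IsLocalMax (fun q : Vec N × ℝ => u i q.1 q.2 - ψ q) (x, t) →
    deriv (fun s => ψ (x, s)) t +
      D.H i x (gradient (fun y => ψ (y, t)) x) (fun j => u j x t) ≤ 0

/-- Viscosity supersolution of the weakly coupled system (S). -/
def IsViscositySupersolution {N m : ℕ} (D : HamHyp N m) (φ : Fin m → Vec N → ℝ)
    (u : Fin m → Vec N → ℝ → ℝ) : Prop :=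
  (∀ i x, φ i x ≤ u i x 0) ∧
  ∀ (i : Fin m) (x : Vec N) (t : ℝ), 0 < t → ∀ ψ : Vec N × ℝ → ℝ,
    ContDiffAt ℝ 1 ψ (x, t) →
    IsLocalMin (fun q : Vec N × ℝ => u i q.1 q.2 - ψ q) (x, t) →
    0 ≤ deriv (fun s => ψ (x, s)) t +
      D.H i x (gradient (fun y => ψ (y, t)) x) (fun j => u j x t)

/-- Viscosity solution of the weakly coupled system (S): a continuous function on
`M × [0,∞)` which is both a viscosity sub- and supersolution. -/
def IsViscositySolution {N m : ℕ} (D : HamHyp N m) (φ : Fin m → Vec N → ℝ)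
    (u : Fin m → Vec N → ℝ → ℝ) : Prop :=
  ContinuousOn (fun q : Vec N × ℝ => fun i => u i q.1 q.2) (univ ×ˢ Ici 0) ∧
  (∀ i t, ZPeriodic fun x => u i x t) ∧
  IsViscositySubsolution D φ u ∧ IsViscositySupersolution D φ u

/-- Hamiltonians satisfying (H1)-(H4) together with the splitting assumption (A). -/
structure SplitHyp (N m : ℕ) extends HamHyp N m where
  /-- kinetic part `h_i(x,p)` -/
  kin : Fin m → Vec N → Vec N → ℝ
  /-- potential part `P_i(x,u)` -/
  P : Fin m → Vec N → (Fin m → ℝ) → ℝ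
  a : ℝ
  A : ℝ
  a_pos : 0 < a
  a_lt_one : a < 1
  one_lt_A : 1 < A
  split : ∀ i x p u, H i x p u = kin i x p + P i x u
  kin_lower : ∀ i x p, a * ‖p‖ ^ 2 ≤ kin i x p
  kin_upper : ∀ i x p, kin i x p ≤ A * ‖p‖ ^ 2
  kin_grad : ∀ i x p, ‖fderiv ℝ (fun y => kin i y p) x‖ ≤ A * ‖p‖ ^ 2

/-- `Q_T = ‖u‖_{∞, M×[0,T]}` (sup-norm of a vector valued function on the slab). -/
def QT {N m : ℕ} (u : Fin m → Vec N → ℝ → ℝ) (T : ℝ) : ℝ :=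
  ⨆ q : Vec N × Icc (0:ℝ) T, ‖(fun i => u i q.1 (q.2 : ℝ) : Fin m → ℝ)‖

namespace SplitHyp

variable {N m : ℕ}

/-- `C = A/a`. -/
def C (S : SplitHyp N m) : ℝ := S.A / S.a

/-- `t_Θ = min{1, 1/(16 Θ²)}`. -/
def tθ (S : SplitHyp N m) : ℝ := min 1 (1 / (16 * S.toHamHyp.Θmax ^ 2))

/-- `B_T = max_i sup{|P_i(x,v)| : x ∈ M, v ∈ [−Q_T,Q_T]^m}`. -/
def B (S : SplitHyp N m) (u : Fin m → Vec N → ℝ → ℝ) (T : ℝ) : ℝ :=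
  ⨆ i : Fin m, ⨆ x : Vec N, ⨆ v : Fin m → Icc (-(QT u T)) (QT u T),
    |S.P i x fun j => (v j : ℝ)|

/-- `F_T = 2 Q_T + T·B_T`. -/
def F (S : SplitHyp N m) (u : Fin m → Vec N → ℝ → ℝ) (T : ℝ) : ℝ :=
  2 * QT u T + T * S.B u T

/-- `σ_T = max_i sup{|∂ₓP_i(x,v)| : x ∈ M, v ∈ [−Q_T,Q_T]^m}`. -/
def sig (S : SplitHyp N m) (u : Fin m → Vec N → ℝ → ℝ) (T : ℝ) : ℝ :=
  ⨆ i : Fin m, ⨆ x : Vec N, ⨆ v : Fin m → Icc (-(QT u T)) (QT u T),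
    ‖fderiv ℝ (fun y => S.P i y fun j => (v j : ℝ)) x‖

end SplitHyp

/-- The Lagrangian associated to a single Hamiltonian. -/
def Lag {N m : ℕ} (H : Vec N → Vec N → (Fin m → ℝ) → ℝ) (x v : Vec N) (u : Fin m → ℝ) : ℝ :=
  ⨆ p : Vec N, (⟪p, v⟫ - H x p u)

/-- Viscosity solution on `M × [0,T]` of the single equation
`∂ₜw + H(x, ∂ₓw, ū(x,t)) = 0`, `w(·,0) = φ`, with frozen coupling `ū`. -/
def IsFrozenViscositySolution {N m : ℕ} (T : ℝ) (H : Vec N → Vec N → (Fin m → ℝ) → ℝ)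
    (ubar : Vec N → ℝ → Fin m → ℝ) (φ : Vec N → ℝ) (w : Vec N → ℝ → ℝ) : Prop :=
  ContinuousOn (fun q : Vec N × ℝ => w q.1 q.2) (univ ×ˢ Icc 0 T) ∧
  (∀ t, ZPeriodic fun x => w x t) ∧
  (∀ x, w x 0 = φ x) ∧
  (∀ (x : Vec N) (t : ℝ), 0 < t → t ≤ T → ∀ ψ : Vec N × ℝ → ℝ,
    ContDiffAt ℝ 1 ψ (x, t) →
    IsLocalMax (fun q : Vec N × ℝ => w q.1 q.2 - ψ q) (x, t) →
    deriv (fun s => ψ (x, s)) t + H x (gradient (fun y => ψ (y, t)) x) (ubar x t) ≤ 0) ∧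
  (∀ (x : Vec N) (t : ℝ), 0 < t → t ≤ T → ∀ ψ : Vec N × ℝ → ℝ,
    ContDiffAt ℝ 1 ψ (x, t) →
    IsLocalMin (fun q : Vec N × ℝ => w q.1 q.2 - ψ q) (x, t) →
    0 ≤ deriv (fun s => ψ (x, s)) t + H x (gradient (fun y => ψ (y, t)) x) (ubar x t))

end

section Aux

open Filter

variable {N m : ℕ}

lemma HamHyp.Hcont (D : HamHyp N m) (i : Fin m) :
    Continuous fun q : Vec N × Vec N × (Fin m → ℝ) => D.H i q.1 q.2.1 q.2.2 :=
  (D.h1 i).continuous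

lemma HamHyp.legendre_bddAbove (D : HamHyp N m) (i : Fin m) (x v : Vec N) (u : Fin m → ℝ) :
    BddAbove (Set.range fun p : Vec N => ⟪p, v⟫ - D.H i x p u) := by
  have h3 := D.h3 i x u
  have hev : ∀ᶠ p in cocompact (Vec N), ‖v‖ + 1 ≤ D.H i x p u / ‖p‖ :=
    h3.eventually_ge_atTop _
  rw [Filter.eventually_iff, Filter.mem_cocompact] at hev
  obtain ⟨K, hK, hKsub⟩ := hev
  have hK' : IsCompact (K ∪ Metric.closedBall 0 1) := hK.union (isCompact_closedBall 0 1)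
  have hcont : Continuous fun p : Vec N => ⟪p, v⟫ - D.H i x p u := by
    have hH : Continuous fun p : Vec N => D.H i x p u := by
      have : Continuous fun p : Vec N => ((x, p, u) : Vec N × Vec N × (Fin m → ℝ)) := by fun_prop
      exact (D.Hcont i).comp this
    exact (continuous_id.inner continuous_const).sub hH
  obtain ⟨C, hC⟩ := (hK'.image hcont).bddAbove
  refine ⟨max C 0, ?_⟩
  rintro _ ⟨p, rfl⟩
  by_cases hp : p ∈ K ∪ Metric.closedBall 0 1
  · exact le_trans (hC (Set.mem_image_of_mem _ hp)) (le_max_left _ _)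
  · change p ∉ K ∪ Metric.closedBall 0 1 at hp
    have hpK : p ∉ K := fun h => hp (Set.mem_union_left _ h)
    have hpB : p ∉ Metric.closedBall (0 : Vec N) 1 := fun h => hp (Set.mem_union_right _ h)
    have hdiv : ‖v‖ + 1 ≤ D.H i x p u / ‖p‖ := hKsub hpK
    have hnorm : 1 < ‖p‖ := by
      simpa [Metric.mem_closedBall, dist_zero_right] using hpB
    have hp0 : (0:ℝ) < ‖p‖ := lt_trans one_pos hnorm
    have hH : (‖v‖ + 1) * ‖p‖ ≤ D.H i x p u := by
      rwa [← le_div_iff₀ hp0]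
    have hinner : ⟪p, v⟫ ≤ ‖p‖ * ‖v‖ := real_inner_le_norm p v
    have : ⟪p, v⟫ - D.H i x p u ≤ -‖p‖ := by nlinarith
    exact le_trans this (le_trans (by linarith) (le_max_right C 0))

lemma HamHyp.le_L (D : HamHyp N m) (i : Fin m) (x v : Vec N) (u : Fin m → ℝ) (p : Vec N) :
    ⟪p, v⟫ - D.H i x p u ≤ D.L i x v u :=
  le_ciSup (D.legendre_bddAbove i x v u) p

lemma HamHyp.neg_H_le_L (D : HamHyp N m) (i : Fin m) (x v : Vec N) (u : Fin m → ℝ) :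
    -D.H i x 0 u ≤ D.L i x v u := by
  simpa using D.le_L i x v u 0

lemma HamHyp.L_le_L_add (D : HamHyp N m) (i : Fin m) (x v : Vec N) (u₁ u₂ : Fin m → ℝ) :
    D.L i x v u₁ ≤ D.L i x v u₂ + D.Θ i * ‖u₁ - u₂‖ := by
  refine ciSup_le fun p => ?_
  have h4 := D.h4 i x p u₁ u₂
  have h1 := abs_le.mp h4
  have : ⟪p, v⟫ - D.H i x p u₁ ≤ (⟪p, v⟫ - D.H i x p u₂) + D.Θ i * ‖u₁ - u₂‖ := by linarith
  exact le_trans this (add_le_add_left (D.le_L i x v u₂ p) _)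

lemma HamHyp.abs_L_sub_L (D : HamHyp N m) (i : Fin m) (x v : Vec N) (u₁ u₂ : Fin m → ℝ) :
    |D.L i x v u₁ - D.L i x v u₂| ≤ D.Θ i * ‖u₁ - u₂‖ := by
  have h1 := D.L_le_L_add i x v u₁ u₂
  have h2 := D.L_le_L_add i x v u₂ u₁
  rw [norm_sub_rev] at h2
  rw [abs_le]; constructor <;> linarith

lemma HamHyp.L_continuous_u (D : HamHyp N m) (i : Fin m) (x v : Vec N) :
    Continuous fun u : Fin m → ℝ => D.L i x v u := by
  have hθ : 0 ≤ D.Θ i := (D.Θ_pos i).le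
  refine (LipschitzWith.of_dist_le_mul (K := Real.toNNReal (D.Θ i)) fun u₁ u₂ => ?_).continuous
  rw [Real.dist_eq, dist_eq_norm, Real.coe_toNNReal _ hθ]
  exact D.abs_L_sub_L i x v u₁ u₂

end Aux
section Aux2

open Filter MeasureTheory

variable {N m : ℕ}

lemma HamHyp.cost_aestronglyMeasurable (D : HamHyp N m) (i : Fin m)
    (μ : MeasureTheory.Measure ℝ) (X V : ℝ → Vec N) (R : ℝ → Fin m → ℝ)
    (hX : AEMeasurable X μ) (hV : AEMeasurable V μ) (hR : AEMeasurable R μ) :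
    AEStronglyMeasurable (fun σ => D.L i (X σ) (V σ) (R σ)) μ := by
  obtain ⟨p, hp⟩ := TopologicalSpace.exists_dense_seq (Vec N)
  set g : Vec N × Vec N × (Fin m → ℝ) → Vec N → ℝ :=
    fun q p' => ⟪p', q.2.1⟫ - D.H i q.1 p' q.2.2 with hg
  have hgc : ∀ p', Continuous fun q => g q p' := by
    intro p'
    have hH : Continuous fun q : Vec N × Vec N × (Fin m → ℝ) => D.H i q.1 p' q.2.2 := by
      have h0 : Continuous fun q : Vec N × Vec N × (Fin m → ℝ) =>
          ((q.1, p', q.2.2) : Vec N × Vec N × (Fin m → ℝ)) := by fun_prop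
      exact (D.Hcont i).comp h0
    exact (Continuous.inner continuous_const (continuous_fst.comp continuous_snd)).sub hH
  have hgq : ∀ q, Continuous fun p' => g q p' := by
    intro q
    have hH : Continuous fun p' : Vec N => D.H i q.1 p' q.2.2 := by
      have h0 : Continuous fun p' : Vec N =>
          ((q.1, p', q.2.2) : Vec N × Vec N × (Fin m → ℝ)) := by fun_prop
      exact (D.Hcont i).comp h0
    exact (continuous_id.inner continuous_const).sub hH
  have hbdd : ∀ q : Vec N × Vec N × (Fin m → ℝ), BddAbove (Set.range (g q)) :=
    fun q => D.legendre_bddAbove i q.1 q.2.1 q.2.2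
  set M : ℕ → Vec N × Vec N × (Fin m → ℝ) → ℝ :=
    fun n q => (Finset.range (n+1)).sup' (by simp) (fun k => g q (p k)) with hM
  have hMle : ∀ n q, M n q ≤ D.L i q.1 q.2.1 q.2.2 := by
    intro n q
    exact Finset.sup'_le _ _ fun k _ => le_ciSup (hbdd q) (p k)
  have hMbdd : ∀ q, BddAbove (Set.range fun n => M n q) := by
    intro q
    exact ⟨D.L i q.1 q.2.1 q.2.2, by rintro _ ⟨n, rfl⟩; exact hMle n q⟩
  have hMmono : ∀ q, Monotone fun n => M n q := by
    intro q n₁ n₂ hn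
    exact Finset.sup'_mono _ (Finset.range_subset_range.mpr (by omega)) (by simp)
  have hMsup : ∀ q, (⨆ n, M n q) = D.L i q.1 q.2.1 q.2.2 := by
    intro q
    refine le_antisymm (ciSup_le fun n => hMle n q) (ciSup_le fun p' => ?_)
    refine le_of_forall_pos_le_add fun ε hε => ?_
    have hc : ContinuousAt (fun y => g q y) p' := (hgq q).continuousAt
    rw [Metric.continuousAt_iff] at hc
    obtain ⟨δ, hδ, hball⟩ := hc ε hε
    obtain ⟨k, hk⟩ : ∃ k, p k ∈ Metric.ball p' δ := by
      have := hp.exists_mem_open Metric.isOpen_ball ⟨p', Metric.mem_ball_self hδ⟩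
      simpa using this
    have h1 : |g q (p k) - g q p'| < ε := by
      have := hball (Metric.mem_ball.mp hk)
      rwa [Real.dist_eq] at this
    have h2 : g q (p k) ≤ M k q :=
      Finset.le_sup' (fun j => g q (p j)) (Finset.self_mem_range_succ k)
    have h3 : M k q ≤ ⨆ n, M n q := le_ciSup (hMbdd q) k
    have h5 := abs_lt.mp h1
    have h4 : g q p' = ⟪p', q.2.1⟫ - D.H i q.1 p' q.2.2 := rfl
    have h6 := h5.1
    calc ⟪p', q.2.1⟫ - D.H i q.1 p' q.2.2 = g q p' := h4.symm
      _ ≤ g q (p k) + ε := by linarith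
      _ ≤ (⨆ n, M n q) + ε := by linarith
  have hMcont : ∀ n, Continuous (M n) := by
    intro n
    exact Continuous.finset_sup'_apply (by simp) fun k _ => hgc (p k)
  have htriple : AEMeasurable (fun σ => ((X σ, V σ, R σ) : Vec N × Vec N × (Fin m → ℝ))) μ :=
    hX.prodMk (hV.prodMk hR)
  have hfn : ∀ n, AEStronglyMeasurable (fun σ => M n (X σ, V σ, R σ)) μ := fun n =>
    ((hMcont n).measurable.comp_aemeasurable htriple).aestronglyMeasurable
  refine aestronglyMeasurable_of_tendsto_ae atTop hfn ?_
  refine Filter.Eventually.of_forall fun σ => ?_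
  have := tendsto_atTop_ciSup (hMmono (X σ, V σ, R σ)) (hMbdd (X σ, V σ, R σ))
  rwa [hMsup (X σ, V σ, R σ)] at this

end Aux2
section Aux3

open MeasureTheory

variable {N m : ℕ}

/-- The fundamental cube is compact. -/
lemma cube_compact (N : ℕ) : IsCompact {x : Vec N | ∀ j, x j ∈ Icc (0:ℝ) 1} := by
  rw [Metric.isCompact_iff_isClosed_bounded]
  constructor
  · have : {x : Vec N | ∀ j, x j ∈ Icc (0:ℝ) 1} =
        ⋂ j, (fun x : Vec N => x j) ⁻¹' Icc (0:ℝ) 1 := by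
      ext x; simp [Set.mem_iInter]
    rw [this]
    exact isClosed_iInter fun j =>
      IsClosed.preimage (EuclideanSpace.proj j).continuous isClosed_Icc
  · rw [Metric.isBounded_iff_subset_closedBall (0 : Vec N)]
    refine ⟨Real.sqrt N, fun x hx => ?_⟩
    rw [Metric.mem_closedBall, dist_zero_right]
    rw [EuclideanSpace.norm_eq]
    refine Real.sqrt_le_sqrt ?_
    calc (∑ j, ‖x j‖ ^ 2) ≤ ∑ j : Fin N, 1 := by
          refine Finset.sum_le_sum fun j _ => ?_
          have h1 := (hx j).1; have h2 := (hx j).2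
          rw [Real.norm_eq_abs, sq_abs]
          nlinarith
      _ = N := by simp

/-- Every point of `ℝ^N` is a `ℤ^N`-translate of a point in the cube. -/
lemma exists_translate (x : Vec N) :
    ∃ k : Fin N → ℤ, (x + intVec k) ∈ {y : Vec N | ∀ j, y j ∈ Icc (0:ℝ) 1} := by
  refine ⟨fun j => -⌊x j⌋, fun j => ?_⟩
  have h1 : (x + intVec fun j => -⌊x j⌋) j = x j - ⌊x j⌋ := by
    have : (x + intVec fun j => -⌊x j⌋) j = x j + ((-⌊x j⌋ : ℤ) : ℝ) := by simp [intVec]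
    rw [this, Int.cast_neg, ← sub_eq_add_neg]
  rw [h1, Int.self_sub_floor]
  exact ⟨Int.fract_nonneg (x j), (Int.fract_lt_one (x j)).le⟩

/-- A continuous periodic function on a compact time slab is bounded. -/
lemma periodic_slab_bound (f : Vec N → ℝ → ℝ) (a b : ℝ)
    (hc : ContinuousOn (fun q : Vec N × ℝ => f q.1 q.2) (Set.univ ×ˢ Icc a b))
    (hp : ∀ t, ZPeriodic fun x => f x t) :
    ∃ C, ∀ x t, t ∈ Icc a b → |f x t| ≤ C := by
  by_cases hab : a ≤ b
  · set K := {x : Vec N | ∀ j, x j ∈ Icc (0:ℝ) 1} with hK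
    have hKc : IsCompact K := cube_compact N
    have hKn : (0 : Vec N) ∈ K := fun j => by simp
    have hL : IsCompact (K ×ˢ Icc a b) := hKc.prod isCompact_Icc
    have hLn : (K ×ˢ Icc a b).Nonempty := ⟨(0, a), hKn, by simp [hab]⟩
    have hcL : ContinuousOn (fun q : Vec N × ℝ => |f q.1 q.2|) (K ×ˢ Icc a b) := by
      refine ContinuousOn.abs (hc.mono ?_)
      exact Set.prod_mono (Set.subset_univ K) subset_rfl
    obtain ⟨q0, _, hq0⟩ := hL.exists_isMaxOn hLn hcL
    refine ⟨|f q0.1 q0.2|, fun x t ht => ?_⟩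
    obtain ⟨k, hk⟩ := exists_translate x
    have hper : f (x + intVec k) t = f x t := hp t x k
    have h2 := hq0 (show ((x + intVec k, t) : Vec N × ℝ) ∈ K ×ˢ Icc a b from ⟨hk, ht⟩)
    rw [← hper]
    exact h2
  · exact ⟨0, fun x t ht => absurd (ht.1.trans ht.2) hab⟩

end Aux3
section Aux4

open MeasureTheory intervalIntegral

variable {N m : ℕ}

lemma ACCurve.continuousOn {a b : ℝ} (hab : a ≤ b) (γ : ACCurve N a b) :
    ContinuousOn γ.toFun (Icc a b) := by
  have h1 : ContinuousOn (fun τ => γ.toFun a + ∫ σ in a..τ, γ.deriv σ) (uIcc a b) :=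
    continuousOn_const.add
      (intervalIntegral.continuousOn_primitive_interval' γ.integrable left_mem_uIcc)
  rw [Set.uIcc_of_le hab] at h1
  exact h1.congr fun τ hτ => γ.represents τ hτ

/-- The constant curve at `x`. -/
def constCurve (N : ℕ) (a b : ℝ) (x : Vec N) : ACCurve N a b where
  toFun := fun _ => x
  deriv := fun _ => 0
  integrable := intervalIntegrable_const
  represents := fun t _ => by simp

lemma candidates_nonempty (D : HamHyp N m) (ψ : Fin m → Vec N → ℝ)
    (c : Fin m → Vec N → ℝ → ℝ)
    (hc : ContinuousOn (fun q : Vec N × ℝ => fun j => c j q.1 q.2) (Set.univ ×ˢ Ici 0))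
    (i : Fin m) (x : Vec N) (t : ℝ) (ht : 0 ≤ t) :
    (candidates D ψ c i x t).Nonempty := by
  refine ⟨ψ i x + ∫ σ in (0:ℝ)..t,
      D.L i ((constCurve N 0 t x).toFun σ) ((constCurve N 0 t x).deriv σ)
        fun j => c j ((constCurve N 0 t x).toFun σ) σ, ?_⟩
  refine ⟨constCurve N 0 t x, rfl, ?_, rfl⟩
  have hcont : ContinuousOn
      (fun σ : ℝ => D.L i x 0 fun j => c j x σ) (Set.uIcc 0 t) := by
    rw [Set.uIcc_of_le ht]
    have h1 : ContinuousOn (fun σ : ℝ => (fun j => c j x σ : Fin m → ℝ)) (Icc 0 t) := by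
      have h2 : ContinuousOn (fun σ : ℝ => ((x, σ) : Vec N × ℝ)) (Icc 0 t) :=
        (continuous_const.prodMk continuous_id).continuousOn
      refine hc.comp h2 fun σ hσ => ?_
      exact ⟨Set.mem_univ _, hσ.1⟩
    exact (D.L_continuous_u i x 0).comp_continuousOn h1
  exact hcont.intervalIntegrable

/-- Explicit lower bound for candidate values. -/
lemma candidates_lowerBound (D : HamHyp N m) (ψ : Fin m → Vec N → ℝ)
    (c : Fin m → Vec N → ℝ → ℝ) (i : Fin m) (Cψ : ℝ)
    (hψ : ∀ y, |ψ i y| ≤ Cψ) (t : ℝ) (ht : 0 ≤ t)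
    (CH : ℝ) (hCH : ∀ y σ, σ ∈ Icc 0 t → D.H i y 0 (fun j => c j y σ) ≤ CH) :
    ∀ x, ∀ A ∈ candidates D ψ c i x t, -(Cψ + t * CH) ≤ A := by
  rintro x A ⟨γ, hγt, hint, rfl⟩
  have hmono : ∫ σ in (0:ℝ)..t, (-CH) ≤
      ∫ σ in (0:ℝ)..t, D.L i (γ.toFun σ) (γ.deriv σ) fun j => c j (γ.toFun σ) σ := by
    refine intervalIntegral.integral_mono_on ht intervalIntegrable_const hint fun σ hσ => ?_
    calc (-CH) ≤ -D.H i (γ.toFun σ) 0 fun j => c j (γ.toFun σ) σ := by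
          have := hCH (γ.toFun σ) σ hσ; linarith
      _ ≤ D.L i (γ.toFun σ) (γ.deriv σ) fun j => c j (γ.toFun σ) σ :=
          D.neg_H_le_L i _ _ _
  have h0 : ∫ σ in (0:ℝ)..t, (-CH : ℝ) = t * (-CH) := by
    simp [intervalIntegral.integral_const]
  have hψ0 : -Cψ ≤ ψ i (γ.toFun 0) := (abs_le.mp (hψ (γ.toFun 0))).1
  rw [h0] at hmono
  nlinarith [hmono, hψ0]

lemma candidates_bddBelow (D : HamHyp N m) (ψ : Fin m → Vec N → ℝ)
    (c : Fin m → Vec N → ℝ → ℝ) (i : Fin m) (Cψ : ℝ)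
    (hψ : ∀ y, |ψ i y| ≤ Cψ) (t : ℝ) (ht : 0 ≤ t)
    (CH : ℝ) (hCH : ∀ y σ, σ ∈ Icc 0 t → D.H i y 0 (fun j => c j y σ) ≤ CH) (x : Vec N) :
    BddBelow (candidates D ψ c i x t) :=
  ⟨-(Cψ + t * CH), fun A hA => candidates_lowerBound D ψ c i Cψ hψ t ht CH hCH x A hA⟩

end Aux4
section Aux5

open MeasureTheory intervalIntegral

variable {N m : ℕ}

/-- Gluing integrable functions on adjacent intervals. -/
lemma piecewise_glue {E : Type*} [NormedAddCommGroup E] [NormedSpace ℝ E]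
    {s b : ℝ} (hs : 0 ≤ s) (hsb : s ≤ b) (f g c : ℝ → E)
    (hf : IntervalIntegrable f volume 0 s) (hg : IntervalIntegrable g volume s b)
    (hc1 : ∀ τ ∈ Set.Ioc (0:ℝ) s, c τ = f τ) (hc2 : ∀ τ ∈ Set.Ioc s b, c τ = g τ) :
    IntervalIntegrable c volume 0 b ∧
      (∫ τ in (0:ℝ)..b, c τ) = (∫ τ in (0:ℝ)..s, f τ) + ∫ τ in s..b, g τ := by
  have h1 : IntervalIntegrable c volume 0 s := by
    rw [intervalIntegrable_iff] at hf ⊢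
    rw [Set.uIoc_of_le hs] at hf ⊢
    exact hf.congr_fun (fun τ hτ => (hc1 τ hτ).symm) measurableSet_Ioc
  have h2 : IntervalIntegrable c volume s b := by
    rw [intervalIntegrable_iff] at hg ⊢
    rw [Set.uIoc_of_le hsb] at hg ⊢
    exact hg.congr_fun (fun τ hτ => (hc2 τ hτ).symm) measurableSet_Ioc
  refine ⟨h1.trans h2, ?_⟩
  have hadd := intervalIntegral.integral_add_adjacent_intervals h1 h2
  have e1 : (∫ τ in (0:ℝ)..s, c τ) = ∫ τ in (0:ℝ)..s, f τ := by
    rw [intervalIntegral.integral_of_le hs, intervalIntegral.integral_of_le hs]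
    exact setIntegral_congr_fun measurableSet_Ioc fun τ hτ => hc1 τ hτ
  have e2 : (∫ τ in s..b, c τ) = ∫ τ in s..b, g τ := by
    rw [intervalIntegral.integral_of_le hsb, intervalIntegral.integral_of_le hsb]
    exact setIntegral_congr_fun measurableSet_Ioc fun τ hτ => hc2 τ hτ
  rw [← hadd, e1, e2]

/-- Restriction of a curve on `[0,b]` to `[0,s]`. -/
def ACCurve.restrict {b : ℝ} (γ : ACCurve N 0 b) (s : ℝ) (hs : 0 ≤ s) (hsb : s ≤ b) :
    ACCurve N 0 s where
  toFun := γ.toFun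
  deriv := γ.deriv
  integrable := γ.integrable.mono_set (by
    rw [Set.uIcc_of_le hs, Set.uIcc_of_le (hs.trans hsb)]
    exact Set.Icc_subset_Icc le_rfl hsb)
  represents := fun τ hτ => γ.represents τ ⟨hτ.1, hτ.2.trans hsb⟩

/-- Time-shift: from a curve on `[0,t+s]`, the curve `τ ↦ γ(τ+s)` on `[0,t]`. -/
def ACCurve.shift {t s : ℝ} (γ : ACCurve N 0 (t + s)) (hs : 0 ≤ s) (ht : 0 ≤ t) :
    ACCurve N 0 t where
  toFun := fun τ => γ.toFun (τ + s)
  deriv := fun τ => γ.deriv (τ + s)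
  integrable := by
    have h1 : IntervalIntegrable γ.deriv volume s (t + s) :=
      γ.integrable.mono_set (by
        rw [Set.uIcc_of_le (by linarith : (0:ℝ) ≤ t + s), Set.uIcc_of_le (by linarith : s ≤ t + s)]
        exact Set.Icc_subset_Icc hs le_rfl)
    have h2 := h1.comp_add_right s
    simpa using h2
  represents := by
    intro τ hτ
    have hτs : τ + s ∈ Icc 0 (t + s) := ⟨by linarith [hτ.1], by linarith [hτ.2]⟩
    have hss : s ∈ Icc 0 (t + s) := ⟨hs, by linarith⟩
    have r1 := γ.represents (τ + s) hτs
    have r2 := γ.represents s hss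
    have hint1 : IntervalIntegrable γ.deriv volume 0 s :=
      γ.integrable.mono_set (by
        rw [Set.uIcc_of_le hs, Set.uIcc_of_le (by linarith : (0:ℝ) ≤ t + s)]
        exact Set.Icc_subset_Icc le_rfl (by linarith))
    have hint2 : IntervalIntegrable γ.deriv volume s (τ + s) :=
      γ.integrable.mono_set (by
        rw [Set.uIcc_of_le (by linarith [hτ.1] : s ≤ τ + s),
          Set.uIcc_of_le (by linarith : (0:ℝ) ≤ t + s)]
        exact Set.Icc_subset_Icc hs (by linarith [hτ.2]))
    have hadd := intervalIntegral.integral_add_adjacent_intervals hint1 hint2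
    have hcomp : (∫ σ in (0:ℝ)..τ, γ.deriv (σ + s)) = ∫ σ in s..(τ + s), γ.deriv σ := by
      have := intervalIntegral.integral_comp_add_right (a := 0) (b := τ) γ.deriv s
      simpa using this
    show γ.toFun (τ + s) = γ.toFun (0 + s) + ∫ σ in (0:ℝ)..τ, γ.deriv (σ + s)
    rw [hcomp, zero_add, r1, r2, ← hadd]
    abel

/-- Concatenation of two curves. -/
noncomputable def ACCurve.concat {t s : ℝ} (hs : 0 ≤ s) (ht : 0 ≤ t) (ζ : ACCurve N 0 s)
    (η : ACCurve N 0 t) (hconn : ζ.toFun s = η.toFun 0) : ACCurve N 0 (t + s) where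
  toFun := fun τ => if τ ≤ s then ζ.toFun τ else η.toFun (τ - s)
  deriv := fun τ => if τ ≤ s then ζ.deriv τ else η.deriv (τ - s)
  integrable := by
    have hη : IntervalIntegrable (fun τ => η.deriv (τ - s)) volume s (t + s) := by
      have := η.integrable.comp_sub_right s
      simpa [add_comm] using this
    exact (piecewise_glue hs (by linarith) ζ.deriv (fun τ => η.deriv (τ - s)) _
      ζ.integrable hη
      (fun τ hτ => by simp only [if_pos hτ.2])
      (fun τ hτ => by simp only [if_neg (not_le.mpr hτ.1)])).1
  represents := by
    intro τ hτ
    by_cases hcase : τ ≤ s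
    · have h1 : IntervalIntegrable ζ.deriv volume 0 τ :=
        ζ.integrable.mono_set (by
          rw [Set.uIcc_of_le hτ.1, Set.uIcc_of_le hs]
          exact Set.Icc_subset_Icc le_rfl hcase)
      have e1 : (∫ σ in (0:ℝ)..τ, if σ ≤ s then ζ.deriv σ else η.deriv (σ - s)) =
          ∫ σ in (0:ℝ)..τ, ζ.deriv σ := by
        rw [intervalIntegral.integral_of_le hτ.1, intervalIntegral.integral_of_le hτ.1]
        refine setIntegral_congr_fun measurableSet_Ioc fun σ hσ => ?_
        simp only [if_pos (hσ.2.trans hcase)]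
      show (if τ ≤ s then ζ.toFun τ else η.toFun (τ - s)) =
        (if (0:ℝ) ≤ s then ζ.toFun 0 else η.toFun (0 - s)) + _
      rw [if_pos hcase, if_pos hs, e1]
      exact ζ.represents τ ⟨hτ.1, hcase⟩
    · push_neg at hcase
      have hτt : τ - s ∈ Icc 0 t := ⟨by linarith, by linarith [hτ.2]⟩
      have hη : IntervalIntegrable (fun σ => η.deriv (σ - s)) volume s τ := by
        have h0 : IntervalIntegrable η.deriv volume 0 (τ - s) :=
          η.integrable.mono_set (by
            rw [Set.uIcc_of_le hτt.1, Set.uIcc_of_le ht]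
            exact Set.Icc_subset_Icc le_rfl hτt.2)
        have := h0.comp_sub_right s
        simpa [sub_add_cancel] using this
      have hglue := piecewise_glue hs hcase.le ζ.deriv (fun σ => η.deriv (σ - s))
        (fun σ => if σ ≤ s then ζ.deriv σ else η.deriv (σ - s)) ζ.integrable hη
        (fun σ hσ => by simp only [if_pos hσ.2])
        (fun σ hσ => by simp only [if_neg (not_le.mpr hσ.1)])
      have ecomp : (∫ σ in s..τ, η.deriv (σ - s)) = ∫ σ in (0:ℝ)..(τ - s), η.deriv σ := by
        have := intervalIntegral.integral_comp_sub_right (a := s) (b := τ) η.deriv s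
        simpa using this
      have rζ := ζ.represents s ⟨hs, le_rfl⟩
      have rη := η.represents (τ - s) hτt
      show (if τ ≤ s then ζ.toFun τ else η.toFun (τ - s)) =
        (if (0:ℝ) ≤ s then ζ.toFun 0 else η.toFun (0 - s)) + _
      rw [if_neg (not_le.mpr hcase), if_pos hs, hglue.2, ecomp, rη, ← hconn, rζ]
      abel

end Aux5
section Aux6

variable {N m : ℕ}

@[simp] lemma ACCurve.restrict_toFun {b : ℝ} (γ : ACCurve N 0 b) (s : ℝ) (hs : 0 ≤ s)
    (hsb : s ≤ b) : (γ.restrict s hs hsb).toFun = γ.toFun := rfl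

@[simp] lemma ACCurve.restrict_deriv {b : ℝ} (γ : ACCurve N 0 b) (s : ℝ) (hs : 0 ≤ s)
    (hsb : s ≤ b) : (γ.restrict s hs hsb).deriv = γ.deriv := rfl

@[simp] lemma ACCurve.shift_toFun {t s : ℝ} (γ : ACCurve N 0 (t + s)) (hs : 0 ≤ s)
    (ht : 0 ≤ t) (τ : ℝ) : (γ.shift hs ht).toFun τ = γ.toFun (τ + s) := rfl

@[simp] lemma ACCurve.shift_deriv {t s : ℝ} (γ : ACCurve N 0 (t + s)) (hs : 0 ≤ s)
    (ht : 0 ≤ t) (τ : ℝ) : (γ.shift hs ht).deriv τ = γ.deriv (τ + s) := rfl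

@[simp] lemma ACCurve.concat_toFun {t s : ℝ} (hs : 0 ≤ s) (ht : 0 ≤ t) (ζ : ACCurve N 0 s)
    (η : ACCurve N 0 t) (hconn : ζ.toFun s = η.toFun 0) (τ : ℝ) :
    (ACCurve.concat hs ht ζ η hconn).toFun τ =
      if τ ≤ s then ζ.toFun τ else η.toFun (τ - s) := rfl

@[simp] lemma ACCurve.concat_deriv {t s : ℝ} (hs : 0 ≤ s) (ht : 0 ≤ t) (ζ : ACCurve N 0 s)
    (η : ACCurve N 0 t) (hconn : ζ.toFun s = η.toFun 0) (τ : ℝ) :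
    (ACCurve.concat hs ht ζ η hconn).deriv τ =
      if τ ≤ s then ζ.deriv τ else η.deriv (τ - s) := rfl

end Aux6

/-- Proposition 3.5, semigroup property: under (H1)–(H4), defining
`T⁻_t φ(x) = u(x,t)` where `u` is the variational solution of (S) with datum `φ`, one
has `T⁻_{t+s} φ = T⁻_t (T⁻_s φ)` for all `t, s ≥ 0`: if `u` is the variational
solution with datum `φ` and `w` is the variational solution with datum `u(·,s)`, then
`w(x,t) = u(x,t+s)`. -/
theorem statement9 {N m : ℕ} (hN : 0 < N) (hm : 0 < m) (D : HamHyp N m)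
    (φ : Fin m → Vec N → ℝ) (hφc : ∀ i, Continuous (φ i)) (hφp : ∀ i, ZPeriodic (φ i))
    (s : ℝ) (hs : 0 ≤ s)
    (u w : Fin m → Vec N → ℝ → ℝ)
    (hu : IsVariationalSolution D φ u)
    (hw : IsVariationalSolution D (fun i x => u i x s) w) :
    ∀ (i : Fin m) (x : Vec N) (t : ℝ), 0 ≤ t → w i x t = u i x (t + s) := by
  obtain ⟨huc, hup, hueq⟩ := hu
  obtain ⟨hwc, hwp, hweq⟩ := hw
  intro i x t ht
  set T := t with hTdef
  have hFu : (Finset.univ : Finset (Fin m)).Nonempty := ⟨⟨0, hm⟩, Finset.mem_univ _⟩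
  set Θb := Finset.univ.sup' hFu D.Θ with hΘbdef
  have hΘb : ∀ j, D.Θ j ≤ Θb := fun j => Finset.le_sup' D.Θ (Finset.mem_univ j)
  have hΘb0 : 0 ≤ Θb := le_trans (D.Θ_pos ⟨0, hm⟩).le (hΘb _)
  -- continuity of the shifted coupling
  have hvc : ContinuousOn (fun q : Vec N × ℝ => fun j => u j q.1 (q.2 + s))
      (Set.univ ×ˢ Ici 0) := by
    have hmap : ContinuousOn (fun q : Vec N × ℝ => ((q.1, q.2 + s) : Vec N × ℝ))
        (Set.univ ×ˢ Ici 0) :=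
      (continuous_fst.prodMk (continuous_snd.add continuous_const)).continuousOn
    refine huc.comp hmap ?_
    rintro ⟨y, σ⟩ ⟨-, hσ⟩
    exact ⟨Set.mem_univ _, add_nonneg hσ hs⟩
  have hslab : ∀ b : ℝ, (Set.univ ×ˢ Icc (0:ℝ) b : Set (Vec N × ℝ)) ⊆ Set.univ ×ˢ Ici 0 :=
    fun b => Set.prod_mono subset_rfl Set.Icc_subset_Ici_self
  -- the sup-distance bound DT on the slab [0,T]
  have hDTex : ∀ j : Fin m, ∃ C, ∀ y σ, σ ∈ Icc 0 T → |w j y σ - u j y (σ + s)| ≤ C := by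
    intro j
    refine periodic_slab_bound (fun y σ => w j y σ - u j y (σ + s)) 0 T ?_ ?_
    · exact ((continuous_apply j).comp_continuousOn (hwc.mono (hslab T))).sub
        ((continuous_apply j).comp_continuousOn (hvc.mono (hslab T)))
    · intro σ y k
      have h1 : w j (y + intVec k) σ = w j y σ := hwp j σ y k
      have h2 : u j (y + intVec k) (σ + s) = u j y (σ + s) := hup j (σ + s) y k
      show w j (y + intVec k) σ - u j (y + intVec k) (σ + s) = _
      rw [h1, h2]
  choose CD hCD using hDTex
  set DT := Finset.univ.sup' hFu CD with hDTdef
  have hDT : ∀ j y σ, σ ∈ Icc 0 T → |w j y σ - u j y (σ + s)| ≤ DT :=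
    fun j y σ hσ => (hCD j y σ hσ).trans (Finset.le_sup' CD (Finset.mem_univ j))
  have hDT0 : 0 ≤ DT := le_trans (abs_nonneg _) (hDT ⟨0, hm⟩ 0 0 ⟨le_rfl, ht⟩)
  -- bound on φ
  have hCφex : ∀ j : Fin m, ∃ C, ∀ y σ, σ ∈ Icc (0:ℝ) 0 → |φ j y| ≤ C := by
    intro j
    exact periodic_slab_bound (fun y _ => φ j y) 0 0
      ((hφc j).comp continuous_fst).continuousOn (fun _ => hφp j)
  choose Cφf hCφf using hCφex
  have hCφ : ∀ j y, |φ j y| ≤ Finset.univ.sup' hFu Cφf :=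
    fun j y => (hCφf j y 0 ⟨le_rfl, le_rfl⟩).trans (Finset.le_sup' Cφf (Finset.mem_univ j))
  set Cφ := Finset.univ.sup' hFu Cφf with hCφdef
  -- bound on the datum u(·,s)
  have hCusex : ∀ j : Fin m, ∃ C, ∀ y σ, σ ∈ Icc (0:ℝ) 0 → |u j y s| ≤ C := by
    intro j
    refine periodic_slab_bound (fun y _ => u j y s) 0 0 ?_ (fun _ => hup j s)
    have hmap : ContinuousOn (fun q : Vec N × ℝ => ((q.1, s) : Vec N × ℝ))
        (Set.univ ×ˢ Icc (0:ℝ) 0) :=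
      (continuous_fst.prodMk continuous_const).continuousOn
    exact (continuous_apply j).comp_continuousOn <|
      huc.comp hmap (fun q _ => ⟨Set.mem_univ _, hs⟩)
  choose Cusf hCusf using hCusex
  have hCus : ∀ j y, |u j y s| ≤ Finset.univ.sup' hFu Cusf :=
    fun j y => (hCusf j y 0 ⟨le_rfl, le_rfl⟩).trans (Finset.le_sup' Cusf (Finset.mem_univ j))
  set Cus := Finset.univ.sup' hFu Cusf with hCusdef
  -- bound on H(y,0,coupling)
  have hCHuex : ∀ j : Fin m, ∃ C, ∀ y σ, σ ∈ Icc 0 (T + s) →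
      |D.H j y 0 fun k => u k y σ| ≤ C := by
    intro j
    refine periodic_slab_bound (fun y σ => D.H j y 0 fun k => u k y σ) 0 (T + s) ?_ ?_
    · have hin : ContinuousOn (fun q : Vec N × ℝ =>
          ((q.1, (0 : Vec N), fun k => u k q.1 q.2) : Vec N × Vec N × (Fin m → ℝ)))
          (Set.univ ×ˢ Icc 0 (T + s)) :=
        continuous_fst.continuousOn.prodMk
          (continuousOn_const.prodMk (huc.mono (hslab (T + s))))
      exact (D.Hcont j).comp_continuousOn hin
    · intro σ y k
      have he : (fun j => u j (y + intVec k) σ) = fun j => u j y σ :=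
        funext fun j => hup j σ y k
      show (D.H j (y + intVec k) 0 fun j => u j (y + intVec k) σ) = _
      rw [he]
      exact D.periodic j 0 (fun j => u j y σ) y k
  choose CHuf hCHuf using hCHuex
  have hCHu : ∀ j y σ, σ ∈ Icc 0 (T + s) →
      D.H j y 0 (fun k => u k y σ) ≤ Finset.univ.sup' hFu CHuf := fun j y σ hσ =>
    (le_abs_self _).trans ((hCHuf j y σ hσ).trans (Finset.le_sup' CHuf (Finset.mem_univ j)))
  set CHu := Finset.univ.sup' hFu CHuf with hCHudef
  have hCHwex : ∀ j : Fin m, ∃ C, ∀ y σ, σ ∈ Icc 0 T →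
      |D.H j y 0 fun k => w k y σ| ≤ C := by
    intro j
    refine periodic_slab_bound (fun y σ => D.H j y 0 fun k => w k y σ) 0 T ?_ ?_
    · have hin : ContinuousOn (fun q : Vec N × ℝ =>
          ((q.1, (0 : Vec N), fun k => w k q.1 q.2) : Vec N × Vec N × (Fin m → ℝ)))
          (Set.univ ×ˢ Icc 0 T) :=
        continuous_fst.continuousOn.prodMk
          (continuousOn_const.prodMk (hwc.mono (hslab T)))
      exact (D.Hcont j).comp_continuousOn hin
    · intro σ y k
      have he : (fun j => w j (y + intVec k) σ) = fun j => w j y σ :=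
        funext fun j => hwp j σ y k
      show (D.H j (y + intVec k) 0 fun j => w j (y + intVec k) σ) = _
      rw [he]
      exact D.periodic j 0 (fun j => w j y σ) y k
  choose CHwf hCHwf using hCHwex
  have hCHw : ∀ j y σ, σ ∈ Icc 0 T →
      D.H j y 0 (fun k => w k y σ) ≤ Finset.univ.sup' hFu CHwf := fun j y σ hσ =>
    (le_abs_self _).trans ((hCHwf j y σ hσ).trans (Finset.le_sup' CHwf (Finset.mem_univ j)))
  set CHw := Finset.univ.sup' hFu CHwf with hCHwdef
  -- boundedness/nonemptiness of the candidate sets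
  have Bu : ∀ (j : Fin m) (y : Vec N) (τ : ℝ), 0 ≤ τ → τ ≤ T + s →
      BddBelow (candidates D φ u j y τ) := fun j y τ h1 h2 =>
    candidates_bddBelow D φ u j Cφ (fun z => hCφ j z) τ h1 CHu
      (fun z σ hσ => hCHu j z σ ⟨hσ.1, hσ.2.trans h2⟩) y
  have Bw : ∀ (j : Fin m) (y : Vec N) (τ : ℝ), 0 ≤ τ → τ ≤ T →
      BddBelow (candidates D (fun i x => u i x s) w j y τ) := fun j y τ h1 h2 =>
    candidates_bddBelow D (fun i x => u i x s) w j Cus (fun z => hCus j z) τ h1 CHw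
      (fun z σ hσ => hCHw j z σ ⟨hσ.1, hσ.2.trans h2⟩) y
  have Neu : ∀ (j : Fin m) (y : Vec N) (τ : ℝ), 0 ≤ τ →
      (candidates D φ u j y τ).Nonempty := fun j y τ h =>
    candidates_nonempty D φ u huc j y τ h
  have New : ∀ (j : Fin m) (y : Vec N) (τ : ℝ), 0 ≤ τ →
      (candidates D (fun i x => u i x s) w j y τ).Nonempty := fun j y τ h =>
    candidates_nonempty D (fun i x => u i x s) w hwc j y τ h
  -- main induction
  have key : ∀ n : ℕ, ∀ (j : Fin m) (y : Vec N) (τ : ℝ), 0 ≤ τ → τ ≤ T →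
      |w j y τ - u j y (τ + s)| ≤ DT * (Θb * τ) ^ n / n.factorial := by
    intro n
    induction n with
    | zero => intro j y τ h1 h2; simpa using hDT j y τ ⟨h1, h2⟩
    | succ n IH =>
      intro j y τ hτ0 hτT
      have hτs0 : (0:ℝ) ≤ τ + s := by linarith
      have hτsT : τ + s ≤ T + s := by linarith
      have hbnd0 : ∀ σ : ℝ, 0 ≤ σ → 0 ≤ DT * (Θb * σ) ^ n / n.factorial := fun σ hσ =>
        div_nonneg (mul_nonneg hDT0 (pow_nonneg (mul_nonneg hΘb0 hσ) n)) (Nat.cast_nonneg _)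
      have hbnd_cont : Continuous fun σ : ℝ => Θb * (DT * (Θb * σ) ^ n / n.factorial) := by
        fun_prop
      set E := DT * (Θb * τ) ^ (n + 1) / (n + 1).factorial with hEdef
      have hE : (∫ σ in (0:ℝ)..τ, Θb * (DT * (Θb * σ) ^ n / n.factorial)) = E := by
        have e1 : ∀ σ : ℝ, Θb * (DT * (Θb * σ) ^ n / n.factorial)
            = (Θb ^ (n + 1) * DT / n.factorial) * σ ^ n := by
          intro σ; rw [mul_pow]; ring
        rw [hEdef]
        simp_rw [e1]
        rw [intervalIntegral.integral_const_mul, integral_pow, mul_pow]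
        have hfact : ((n + 1).factorial : ℝ) = (n + 1) * n.factorial := by
          rw [Nat.factorial_succ]; push_cast; ring
        rw [hfact]
        have hn0 : (n.factorial : ℝ) ≠ 0 := Nat.cast_ne_zero.mpr n.factorial_ne_zero
        have hn1 : ((n:ℝ) + 1) ≠ 0 := by positivity
        field_simp
        ring
      -- first inequality
      have h₁ : w j y τ ≤ u j y (τ + s) + E := by
        refine le_of_forall_pos_le_add fun ε hε => ?_
        have hlt : sInf (candidates D φ u j y (τ + s)) < u j y (τ + s) + ε := by
          rw [← hueq j y (τ + s) hτs0]; linarith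
        obtain ⟨A, hA, hAlt⟩ := exists_lt_of_csInf_lt (Neu j y (τ + s) hτs0) hlt
        obtain ⟨γ, hγend, hγint, hγA⟩ := hA
        rw [hγA] at hAlt
        have hsub1 : IntervalIntegrable
            (fun σ => D.L j (γ.toFun σ) (γ.deriv σ) fun k => u k (γ.toFun σ) σ) volume 0 s :=
          hγint.mono_set (by
            rw [Set.uIcc_of_le hs, Set.uIcc_of_le hτs0]
            exact Set.Icc_subset_Icc le_rfl (by linarith))
        have hsub2 : IntervalIntegrable
            (fun σ => D.L j (γ.toFun σ) (γ.deriv σ) fun k => u k (γ.toFun σ) σ)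
            volume s (τ + s) :=
          hγint.mono_set (by
            rw [Set.uIcc_of_le (by linarith : s ≤ τ + s), Set.uIcc_of_le hτs0]
            exact Set.Icc_subset_Icc hs le_rfl)
        have hsplit := intervalIntegral.integral_add_adjacent_intervals hsub1 hsub2
        have hu_at : u j (γ.toFun s) s ≤ φ j (γ.toFun 0)
            + ∫ σ in (0:ℝ)..s, D.L j (γ.toFun σ) (γ.deriv σ) fun k => u k (γ.toFun σ) σ := by
          rw [hueq j (γ.toFun s) s hs]
          refine csInf_le (Bu j (γ.toFun s) s hs (by linarith)) ?_
          exact ⟨γ.restrict s hs (by linarith), rfl, hsub1, rfl⟩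
        set η := γ.shift hs hτ0 with hηdef
        have hηend : η.toFun τ = y := by
          rw [hηdef]; show γ.toFun (τ + s) = y; exact hγend
        have hη0 : η.toFun 0 = γ.toFun s := by
          rw [hηdef]; show γ.toFun (0 + s) = _; rw [zero_add]
        have hcv_eq : (fun σ => D.L j (η.toFun σ) (η.deriv σ) fun k => u k (η.toFun σ) (σ + s))
            = fun σ => D.L j (γ.toFun (σ + s)) (γ.deriv (σ + s))
                fun k => u k (γ.toFun (σ + s)) (σ + s) := by
          funext σ; rw [hηdef]
          simp only [ACCurve.shift_toFun, ACCurve.shift_deriv]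
        have hv_int : IntervalIntegrable
            (fun σ => D.L j (η.toFun σ) (η.deriv σ) fun k => u k (η.toFun σ) (σ + s))
            volume 0 τ := by
          rw [hcv_eq]
          have := hsub2.comp_add_right s
          simpa using this
        have hveq : (∫ σ in (0:ℝ)..τ,
              D.L j (η.toFun σ) (η.deriv σ) fun k => u k (η.toFun σ) (σ + s))
            = ∫ σ in s..(τ + s), D.L j (γ.toFun σ) (γ.deriv σ) fun k => u k (γ.toFun σ) σ := by
          rw [hcv_eq]
          have := intervalIntegral.integral_comp_add_right (a := (0:ℝ)) (b := τ)
            (fun σ => D.L j (γ.toFun σ) (γ.deriv σ) fun k => u k (γ.toFun σ) σ) s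
          simpa using this
        have hdiff : ∀ σ ∈ Icc (0:ℝ) τ,
            |D.L j (η.toFun σ) (η.deriv σ) (fun k => w k (η.toFun σ) σ)
              - D.L j (η.toFun σ) (η.deriv σ) fun k => u k (η.toFun σ) (σ + s)|
            ≤ Θb * (DT * (Θb * σ) ^ n / n.factorial) := by
          intro σ hσ
          have h1 := D.abs_L_sub_L j (η.toFun σ) (η.deriv σ)
            (fun k => w k (η.toFun σ) σ) (fun k => u k (η.toFun σ) (σ + s))
          have h2 : ‖(fun k => w k (η.toFun σ) σ : Fin m → ℝ)
              - fun k => u k (η.toFun σ) (σ + s)‖ ≤ DT * (Θb * σ) ^ n / n.factorial := by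
            rw [pi_norm_le_iff_of_nonneg (hbnd0 σ hσ.1)]
            intro k
            have := IH k (η.toFun σ) σ hσ.1 (hσ.2.trans hτT)
            simpa [Real.norm_eq_abs] using this
          exact h1.trans (mul_le_mul (hΘb j) h2 (norm_nonneg _) hΘb0)
        have hXc : ContinuousOn η.toFun (Icc 0 τ) := ACCurve.continuousOn hτ0 η
        have hrIoc : (Set.uIoc (0:ℝ) τ) = Set.Ioc 0 τ := Set.uIoc_of_le hτ0
        have hres : volume.restrict (Set.uIoc (0:ℝ) τ) ≤ volume.restrict (Icc (0:ℝ) τ) := by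
          rw [hrIoc]; exact Measure.restrict_mono Set.Ioc_subset_Icc_self le_rfl
        have hX : AEMeasurable η.toFun (volume.restrict (Set.uIoc (0:ℝ) τ)) :=
          (hXc.aemeasurable measurableSet_Icc).mono_measure hres
        have hV : AEMeasurable η.deriv (volume.restrict (Set.uIoc (0:ℝ) τ)) := by
          have h := η.integrable
          rw [intervalIntegrable_iff] at h
          exact h.aestronglyMeasurable.aemeasurable
        have hpair : ContinuousOn (fun σ : ℝ => ((η.toFun σ, σ) : Vec N × ℝ)) (Icc 0 τ) :=
          hXc.prodMk continuous_id.continuousOn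
        have hRc : ContinuousOn (fun σ => (fun k => w k (η.toFun σ) σ : Fin m → ℝ))
            (Icc 0 τ) := hwc.comp hpair fun σ hσ => ⟨Set.mem_univ _, hσ.1⟩
        have hR : AEMeasurable (fun σ => (fun k => w k (η.toFun σ) σ : Fin m → ℝ))
            (volume.restrict (Set.uIoc (0:ℝ) τ)) :=
          (hRc.aemeasurable measurableSet_Icc).mono_measure hres
        have hmeas : AEStronglyMeasurable
            (fun σ => D.L j (η.toFun σ) (η.deriv σ) fun k => w k (η.toFun σ) σ)
            (volume.restrict (Set.uIoc (0:ℝ) τ)) :=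
          D.cost_aestronglyMeasurable j _ η.toFun η.deriv _ hX hV hR
        have hg_int : IntervalIntegrable
            (fun σ => |D.L j (η.toFun σ) (η.deriv σ) fun k => u k (η.toFun σ) (σ + s)|
              + Θb * (DT * (Θb * σ) ^ n / n.factorial)) volume 0 τ :=
          hv_int.abs.add (hbnd_cont.intervalIntegrable 0 τ)
        have hw_int : IntervalIntegrable
            (fun σ => D.L j (η.toFun σ) (η.deriv σ) fun k => w k (η.toFun σ) σ)
            volume 0 τ := by
          refine hg_int.mono_fun hmeas ?_
          rw [Filter.EventuallyLE, ae_restrict_iff' (by rw [hrIoc]; exact measurableSet_Ioc)]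
          refine Filter.Eventually.of_forall fun σ hσ => ?_
          rw [hrIoc] at hσ
          have hσ' : σ ∈ Icc (0:ℝ) τ := Set.Ioc_subset_Icc_self hσ
          have hd := hdiff σ hσ'
          have h3 := abs_sub_abs_le_abs_sub
            (D.L j (η.toFun σ) (η.deriv σ) fun k => w k (η.toFun σ) σ)
            (D.L j (η.toFun σ) (η.deriv σ) fun k => u k (η.toFun σ) (σ + s))
          rw [Real.norm_eq_abs, Real.norm_eq_abs]
          have h5 : |D.L j (η.toFun σ) (η.deriv σ) fun k => w k (η.toFun σ) σ|
              ≤ |D.L j (η.toFun σ) (η.deriv σ) fun k => u k (η.toFun σ) (σ + s)|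
                + Θb * (DT * (Θb * σ) ^ n / n.factorial) := by linarith
          exact h5.trans (le_abs_self _)
        have hwle : w j y τ ≤ u j (η.toFun 0) s
            + ∫ σ in (0:ℝ)..τ, D.L j (η.toFun σ) (η.deriv σ) fun k => w k (η.toFun σ) σ := by
          rw [hweq j y τ hτ0]
          exact csInf_le (Bw j y τ hτ0 hτT) ⟨η, hηend, hw_int, rfl⟩
        have hint_mono : (∫ σ in (0:ℝ)..τ,
              D.L j (η.toFun σ) (η.deriv σ) fun k => w k (η.toFun σ) σ)
            ≤ (∫ σ in (0:ℝ)..τ,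
              D.L j (η.toFun σ) (η.deriv σ) fun k => u k (η.toFun σ) (σ + s))
              + ∫ σ in (0:ℝ)..τ, Θb * (DT * (Θb * σ) ^ n / n.factorial) := by
          rw [← intervalIntegral.integral_add hv_int (hbnd_cont.intervalIntegrable 0 τ)]
          refine intervalIntegral.integral_mono_on hτ0 hw_int
            (hv_int.add (hbnd_cont.intervalIntegrable 0 τ)) fun σ hσ => ?_
          have := abs_le.mp (hdiff σ hσ)
          linarith [this.2]
        rw [hη0] at hwle
        rw [hveq, hE] at hint_mono
        linarith [hwle, hu_at, hint_mono, hsplit, hAlt]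
      -- second inequality
      have h₂ : u j y (τ + s) ≤ w j y τ + E := by
        refine le_of_forall_pos_le_add fun ε hε => ?_
        have hε2 : 0 < ε / 2 := by linarith
        have hlt : sInf (candidates D (fun i x => u i x s) w j y τ) < w j y τ + ε / 2 := by
          rw [← hweq j y τ hτ0]; linarith
        obtain ⟨A, hA, hAlt⟩ := exists_lt_of_csInf_lt (New j y τ hτ0) hlt
        obtain ⟨η, hηend, hηint, hηA⟩ := hA
        rw [hηA] at hAlt
        have hAlt' : u j (η.toFun 0) s
            + (∫ σ in (0:ℝ)..τ, D.L j (η.toFun σ) (η.deriv σ) fun k => w k (η.toFun σ) σ)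
            < w j y τ + ε / 2 := hAlt
        have hlt2 : sInf (candidates D φ u j (η.toFun 0) s) < u j (η.toFun 0) s + ε / 2 := by
          rw [← hueq j (η.toFun 0) s hs]; linarith
        obtain ⟨B, hB, hBlt⟩ := exists_lt_of_csInf_lt (Neu j (η.toFun 0) s hs) hlt2
        obtain ⟨ζ, hζend, hζint, hζB⟩ := hB
        rw [hζB] at hBlt
        -- v-cost along η: bound and integrability
        have hdiff : ∀ σ ∈ Icc (0:ℝ) τ,
            |(D.L j (η.toFun σ) (η.deriv σ) fun k => u k (η.toFun σ) (σ + s))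
              - D.L j (η.toFun σ) (η.deriv σ) fun k => w k (η.toFun σ) σ|
            ≤ Θb * (DT * (Θb * σ) ^ n / n.factorial) := by
          intro σ hσ
          have h1 := D.abs_L_sub_L j (η.toFun σ) (η.deriv σ)
            (fun k => u k (η.toFun σ) (σ + s)) (fun k => w k (η.toFun σ) σ)
          have h2 : ‖(fun k => u k (η.toFun σ) (σ + s) : Fin m → ℝ)
              - fun k => w k (η.toFun σ) σ‖ ≤ DT * (Θb * σ) ^ n / n.factorial := by
            rw [pi_norm_le_iff_of_nonneg (hbnd0 σ hσ.1)]
            intro k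
            have := IH k (η.toFun σ) σ hσ.1 (hσ.2.trans hτT)
            rw [abs_sub_comm] at this
            simpa [Real.norm_eq_abs] using this
          exact h1.trans (mul_le_mul (hΘb j) h2 (norm_nonneg _) hΘb0)
        have hXc : ContinuousOn η.toFun (Icc 0 τ) := ACCurve.continuousOn hτ0 η
        have hrIoc : (Set.uIoc (0:ℝ) τ) = Set.Ioc 0 τ := Set.uIoc_of_le hτ0
        have hres : volume.restrict (Set.uIoc (0:ℝ) τ) ≤ volume.restrict (Icc (0:ℝ) τ) := by
          rw [hrIoc]; exact Measure.restrict_mono Set.Ioc_subset_Icc_self le_rfl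
        have hX : AEMeasurable η.toFun (volume.restrict (Set.uIoc (0:ℝ) τ)) :=
          (hXc.aemeasurable measurableSet_Icc).mono_measure hres
        have hV : AEMeasurable η.deriv (volume.restrict (Set.uIoc (0:ℝ) τ)) := by
          have h := η.integrable
          rw [intervalIntegrable_iff] at h
          exact h.aestronglyMeasurable.aemeasurable
        have hpair : ContinuousOn (fun σ : ℝ => ((η.toFun σ, σ) : Vec N × ℝ)) (Icc 0 τ) :=
          hXc.prodMk continuous_id.continuousOn
        have hRc : ContinuousOn (fun σ => (fun k => u k (η.toFun σ) (σ + s) : Fin m → ℝ))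
            (Icc 0 τ) := hvc.comp hpair fun σ hσ => ⟨Set.mem_univ _, hσ.1⟩
        have hR : AEMeasurable (fun σ => (fun k => u k (η.toFun σ) (σ + s) : Fin m → ℝ))
            (volume.restrict (Set.uIoc (0:ℝ) τ)) :=
          (hRc.aemeasurable measurableSet_Icc).mono_measure hres
        have hmeas : AEStronglyMeasurable
            (fun σ => D.L j (η.toFun σ) (η.deriv σ) fun k => u k (η.toFun σ) (σ + s))
            (volume.restrict (Set.uIoc (0:ℝ) τ)) :=
          D.cost_aestronglyMeasurable j _ η.toFun η.deriv _ hX hV hR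
        have hg_int : IntervalIntegrable
            (fun σ => |D.L j (η.toFun σ) (η.deriv σ) fun k => w k (η.toFun σ) σ|
              + Θb * (DT * (Θb * σ) ^ n / n.factorial)) volume 0 τ :=
          hηint.abs.add (hbnd_cont.intervalIntegrable 0 τ)
        have hv_int : IntervalIntegrable
            (fun σ => D.L j (η.toFun σ) (η.deriv σ) fun k => u k (η.toFun σ) (σ + s))
            volume 0 τ := by
          refine hg_int.mono_fun hmeas ?_
          rw [Filter.EventuallyLE, ae_restrict_iff' (by rw [hrIoc]; exact measurableSet_Ioc)]
          refine Filter.Eventually.of_forall fun σ hσ => ?_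
          rw [hrIoc] at hσ
          have hσ' : σ ∈ Icc (0:ℝ) τ := Set.Ioc_subset_Icc_self hσ
          have hd := hdiff σ hσ'
          have h3 := abs_sub_abs_le_abs_sub
            (D.L j (η.toFun σ) (η.deriv σ) fun k => u k (η.toFun σ) (σ + s))
            (D.L j (η.toFun σ) (η.deriv σ) fun k => w k (η.toFun σ) σ)
          rw [Real.norm_eq_abs, Real.norm_eq_abs]
          have h5 : |D.L j (η.toFun σ) (η.deriv σ) fun k => u k (η.toFun σ) (σ + s)|
              ≤ |D.L j (η.toFun σ) (η.deriv σ) fun k => w k (η.toFun σ) σ|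
                + Θb * (DT * (Θb * σ) ^ n / n.factorial) := by linarith
          exact h5.trans (le_abs_self _)
        -- concatenate ζ and η
        set γ := ACCurve.concat hs hτ0 ζ η hζend with hγdef
        have hγend : γ.toFun (τ + s) = y := by
          rw [hγdef]
          show (if τ + s ≤ s then ζ.toFun (τ + s) else η.toFun (τ + s - s)) = y
          by_cases hc : τ + s ≤ s
          · have hτ0' : τ = 0 := le_antisymm (by linarith) hτ0
            subst hτ0'
            rw [if_pos hc, zero_add, hζend]
            exact hηend
          · rw [if_neg hc, add_sub_cancel_right]
            exact hηend
        have hγ0 : γ.toFun 0 = ζ.toFun 0 := by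
          rw [hγdef]
          show (if (0:ℝ) ≤ s then ζ.toFun 0 else _) = _
          rw [if_pos hs]
        have hshift_int : IntervalIntegrable
            (fun σ => D.L j (η.toFun (σ - s)) (η.deriv (σ - s))
              fun k => u k (η.toFun (σ - s)) (σ - s + s)) volume s (τ + s) := by
          have := hv_int.comp_sub_right s
          simpa using this
        have hc1 : ∀ σ ∈ Set.Ioc (0:ℝ) s,
            (D.L j (γ.toFun σ) (γ.deriv σ) fun k => u k (γ.toFun σ) σ)
            = D.L j (ζ.toFun σ) (ζ.deriv σ) fun k => u k (ζ.toFun σ) σ := by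
          intro σ hσ
          have e1 : γ.toFun σ = ζ.toFun σ := by rw [hγdef]; exact if_pos hσ.2
          have e2 : γ.deriv σ = ζ.deriv σ := by rw [hγdef]; exact if_pos hσ.2
          rw [e1, e2]
        have hc2 : ∀ σ ∈ Set.Ioc s (τ + s),
            (D.L j (γ.toFun σ) (γ.deriv σ) fun k => u k (γ.toFun σ) σ)
            = D.L j (η.toFun (σ - s)) (η.deriv (σ - s))
                fun k => u k (η.toFun (σ - s)) (σ - s + s) := by
          intro σ hσ
          have e1 : γ.toFun σ = η.toFun (σ - s) := by
            rw [hγdef]; exact if_neg (not_le.mpr hσ.1)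
          have e2 : γ.deriv σ = η.deriv (σ - s) := by
            rw [hγdef]; exact if_neg (not_le.mpr hσ.1)
          rw [e1, e2, sub_add_cancel]
        have hglue := piecewise_glue hs (by linarith : s ≤ τ + s)
          (fun σ => D.L j (ζ.toFun σ) (ζ.deriv σ) fun k => u k (ζ.toFun σ) σ)
          (fun σ => D.L j (η.toFun (σ - s)) (η.deriv (σ - s))
            fun k => u k (η.toFun (σ - s)) (σ - s + s))
          (fun σ => D.L j (γ.toFun σ) (γ.deriv σ) fun k => u k (γ.toFun σ) σ)
          hζint hshift_int hc1 hc2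
        have hu_le : u j y (τ + s) ≤ φ j (γ.toFun 0)
            + ∫ σ in (0:ℝ)..(τ + s),
              D.L j (γ.toFun σ) (γ.deriv σ) fun k => u k (γ.toFun σ) σ := by
          rw [hueq j y (τ + s) hτs0]
          exact csInf_le (Bu j y (τ + s) hτs0 hτsT) ⟨γ, hγend, hglue.1, rfl⟩
        have hshift_eq : (∫ σ in s..(τ + s),
              D.L j (η.toFun (σ - s)) (η.deriv (σ - s))
                fun k => u k (η.toFun (σ - s)) (σ - s + s))
            = ∫ σ in (0:ℝ)..τ,
              D.L j (η.toFun σ) (η.deriv σ) fun k => u k (η.toFun σ) (σ + s) := by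
          have := intervalIntegral.integral_comp_sub_right (a := s) (b := τ + s)
            (fun σ => D.L j (η.toFun σ) (η.deriv σ) fun k => u k (η.toFun σ) (σ + s)) s
          simpa using this
        have hint_mono : (∫ σ in (0:ℝ)..τ,
              D.L j (η.toFun σ) (η.deriv σ) fun k => u k (η.toFun σ) (σ + s))
            ≤ (∫ σ in (0:ℝ)..τ,
              D.L j (η.toFun σ) (η.deriv σ) fun k => w k (η.toFun σ) σ)
              + ∫ σ in (0:ℝ)..τ, Θb * (DT * (Θb * σ) ^ n / n.factorial) := by
          rw [← intervalIntegral.integral_add hηint (hbnd_cont.intervalIntegrable 0 τ)]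
          refine intervalIntegral.integral_mono_on hτ0 hv_int
            (hηint.add (hbnd_cont.intervalIntegrable 0 τ)) fun σ hσ => ?_
          have := abs_le.mp (hdiff σ hσ)
          linarith [this.2]
        rw [hγ0] at hu_le
        rw [hglue.2, hshift_eq] at hu_le
        rw [hE] at hint_mono
        linarith [hu_le, hBlt, hAlt', hint_mono]
      have habs : |w j y τ - u j y (τ + s)| ≤ E :=
        abs_le.mpr ⟨by linarith, by linarith⟩
      exact habs

  -- conclusion
  have hbound : ∀ n : ℕ, |w i x t - u i x (t + s)| ≤ DT * (Θb * t) ^ n / n.factorial :=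
    fun n => key n i x t ht le_rfl
  have hlim : Filter.Tendsto (fun n : ℕ => DT * (Θb * t) ^ n / n.factorial)
      Filter.atTop (nhds 0) := by
    have h := FloorSemiring.tendsto_pow_div_factorial_atTop (K := ℝ) (Θb * t)
    have h2 := h.const_mul DT
    simpa [mul_div_assoc] using h2
  have habs : |w i x t - u i x (t + s)| ≤ 0 := ge_of_tendsto' hlim hbound
  have := abs_eq_zero.mp (le_antisymm habs (abs_nonneg _))
  linarith [this]
end

section
/- Let T > 0 and let G : M × ℝ^N × [0,T] → ℝ be continuous. If u, v ∈ C(M×[0,T],ℝ) are respectively a viscosity subsolution and a viscosity supersolution of ∂_t u + G(x,∂_x u,t) = 0 on M×(0,T), and either u or v is Lipschitz continuous in x uniformly with respect to t, then max_{M×[0,T]} (u − v)⁺ ≤ max_M (u(·,0) − v(·,0))⁺, where r⁺ = max{r,0}. -/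
open MeasureTheory Set Filter Topology
open scoped RealInnerProductSpace

section Helpers
open Real

lemma tdist_le' {N : ℕ} (x y : Vec N) : tdist x y ≤ ‖x - y‖ := by
  have h0 : intVec (0 : Fin N → ℤ) = 0 := by ext i; simp [intVec]
  have := ciInf_le (f := fun k : Fin N → ℤ => ‖x - y + intVec k‖)
    ⟨0, fun r hr => by obtain ⟨k, rfl⟩ := hr; exact norm_nonneg _⟩ (0 : Fin N → ℤ)
  simpa [h0, tdist] using this

lemma cube_reduce {N : ℕ} (x : Vec N) :
    ∃ k : Fin N → ℤ, ‖x + intVec k‖ ≤ Real.sqrt N := by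
  refine ⟨fun i => -⌊x i⌋, ?_⟩
  rw [EuclideanSpace.norm_eq]
  apply Real.sqrt_le_sqrt
  have key : ∀ i : Fin N, ‖(x + intVec fun i => -⌊x i⌋) i‖ ^ 2 ≤ 1 := by
    intro i
    have hx : (x + intVec fun i => -⌊x i⌋) i = Int.fract (x i) := by
      show x i + ((-⌊x i⌋ : ℤ) : ℝ) = Int.fract (x i)
      rw [Int.fract]; push_cast; ring
    rw [hx]
    have h0 := Int.fract_nonneg (x i)
    have h1 := Int.fract_lt_one (x i)
    have hn : ‖Int.fract (x i)‖ = Int.fract (x i) := Real.norm_of_nonneg h0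
    rw [hn]; nlinarith
  calc (∑ i, ‖(x + intVec fun i => -⌊x i⌋) i‖ ^ 2) ≤ ∑ _i : Fin N, (1:ℝ) :=
        Finset.sum_le_sum fun i _ => key i
    _ = N := by simp

/-- bounds for a continuous periodic function on a slab -/
lemma bound_of_periodic {N : ℕ} {T : ℝ} (hT : 0 < T) {u : Vec N → ℝ → ℝ}
    (huc : ContinuousOn (fun q : Vec N × ℝ => u q.1 q.2) (univ ×ˢ Icc 0 T))
    (hup : ∀ t, ZPeriodic fun x => u x t) :
    ∃ C : ℝ, 0 ≤ C ∧ ∀ x : Vec N, ∀ t ∈ Icc (0:ℝ) T, |u x t| ≤ C := by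
  have hK : IsCompact (Metric.closedBall (0 : Vec N) (Real.sqrt N) ×ˢ Icc (0:ℝ) T) :=
    (isCompact_closedBall _ _).prod isCompact_Icc
  obtain ⟨C, hC⟩ := hK.exists_bound_of_continuousOn
    (huc.mono (by intro q hq; exact ⟨trivial, hq.2⟩))
  refine ⟨max C 0, le_max_right _ _, ?_⟩
  intro x t ht
  obtain ⟨k, hk⟩ := cube_reduce x
  have := hC (x + intVec k, t) ⟨by simpa [Metric.mem_closedBall, dist_zero_right] using hk, ht⟩
  have hper := hup t x k
  simp only [Real.norm_eq_abs] at this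
  calc |u x t| = |u (x + intVec k) t| := by simp only at hper; rw [hper]
    _ ≤ C := this
    _ ≤ max C 0 := le_max_left _ _

lemma hasGradientAt_psi {N : ℕ} (c₁ c₂ c₃ c₄ δ : ℝ) (b x : Vec N) :
    HasGradientAt (fun y : Vec N => c₁ + ‖y - b‖^2/δ + c₂ + c₃ + c₄) ((2/δ) • (x - b)) x := by
  rw [hasGradientAt_iff_hasFDerivAt]
  have h : HasFDerivAt (fun y : Vec N => ‖y - b‖^2)
      (2 • (innerSL ℝ (x - b)).comp (ContinuousLinearMap.id ℝ (Vec N))) x := by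
    simpa using ((hasFDerivAt_id x).sub_const b).norm_sq
  simp only [div_eq_mul_inv]
  have h2 := (((h.mul_const δ⁻¹).const_add c₁).add_const c₂).add_const c₃ |>.add_const c₄
  refine h2.congr_fderiv ?_
  ext y
  simp [InnerProductSpace.toDual_apply_apply, real_inner_smul_left]
  ring

lemma hasGradientAt_psi2 {N : ℕ} (c₁ c₂ c₃ c₄ δ : ℝ) (b x : Vec N) :
    HasGradientAt (fun y : Vec N => c₁ - ‖b - y‖^2/δ - c₂ - c₃ - c₄) ((2/δ) • (b - x)) x := by
  rw [hasGradientAt_iff_hasFDerivAt]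
  have h : HasFDerivAt (fun y : Vec N => ‖b - y‖^2)
      (2 • (innerSL ℝ (b - x)).comp (-(ContinuousLinearMap.id ℝ (Vec N)))) x := by
    simpa using ((hasFDerivAt_id x).const_sub b).norm_sq
  simp only [div_eq_mul_inv]
  have h2 := (((h.mul_const δ⁻¹).const_sub c₁).sub_const c₂).sub_const c₃ |>.sub_const c₄
  refine h2.congr_fderiv ?_
  ext y
  simp [InnerProductSpace.toDual_apply_apply, real_inner_smul_left]
  ring

lemma tdist_nonneg'' {N : ℕ} (x y : Vec N) : 0 ≤ tdist x y :=
  le_ciInf fun _ => norm_nonneg _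

lemma deriv_psi (T e sb c c₀ : ℝ) (d : ℝ) (t : ℝ) (ht : t ≠ T) :
    deriv (fun t => c₀ + c + (t - sb)^2/d + e*t + e/(T-t)) t
      = 2*(t-sb)/d + e + e/(T-t)^2 := by
  have h1 : HasDerivAt (fun t : ℝ => (t - sb)^2/d) (2*(t-sb)/d) t := by
    simpa using (((hasDerivAt_id t).sub_const sb).pow 2).div_const d
  have h2 : HasDerivAt (fun t : ℝ => e/(T-t)) (e/(T-t)^2) t := by
    have := (hasDerivAt_const t e).div ((hasDerivAt_const t T).sub (hasDerivAt_id t))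
      (sub_ne_zero.mpr (Ne.symm ht))
    exact this.congr_deriv (by simp only [Pi.sub_apply, id_eq]; ring)
  have := (((h1.const_add (c₀ + c)).add ((hasDerivAt_id t).const_mul e)).add h2).deriv
  have heq : (fun t => c₀ + c + (t - sb)^2/d + e*t + e/(T-t))
      = (fun t => (c₀ + c) + (t - sb)^2/d + e * id t + e/(T-t)) := by
    funext s; simp
  rw [heq]; exact this.trans (by ring)

lemma deriv_psi2 (c₁ c₂ c₃ c₄ d tb s : ℝ) :
    deriv (fun s => c₁ - c₂ - (tb - s)^2/d - c₃ - c₄) s = 2*(tb-s)/d := by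
  have h1 : HasDerivAt (fun s : ℝ => (tb - s)^2/d) (-(2*(tb-s))/d) s := by
    have := (((hasDerivAt_const s tb).sub (hasDerivAt_id s)).pow 2).div_const d
    exact this.congr_deriv (by simp only [Pi.sub_apply, id_eq]; push_cast; ring)
  have := ((((hasDerivAt_const s (c₁ - c₂)).sub h1).sub_const c₃).sub_const c₄).deriv
  have heq : (fun s => c₁ - c₂ - (tb - s)^2/d - c₃ - c₄)
      = (fun s => (c₁ - c₂) - (tb - s)^2/d - c₃ - c₄) := by funext s; ring
  rw [heq]; exact this.trans (by ring)

end Helpers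

section Main

set_option maxHeartbeats 2000000 in
lemma comparison_step {N : ℕ} (T : ℝ) (hT : 0 < T)
    (G : Vec N → Vec N → ℝ → ℝ)
    (hGc : ContinuousOn (fun q : Vec N × Vec N × ℝ => G q.1 q.2.1 q.2.2)
      (univ ×ˢ univ ×ˢ Icc 0 T))
    (u v : Vec N → ℝ → ℝ)
    (huc : ContinuousOn (fun q : Vec N × ℝ => u q.1 q.2) (univ ×ˢ Icc 0 T))
    (hvc : ContinuousOn (fun q : Vec N × ℝ => v q.1 q.2) (univ ×ˢ Icc 0 T))
    (hup : ∀ t, ZPeriodic fun x => u x t)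
    (hvp : ∀ t, ZPeriodic fun x => v x t)
    (hsub : ∀ (x : Vec N) (t : ℝ), 0 < t → t < T → ∀ ψ : Vec N × ℝ → ℝ,
      ContDiffAt ℝ 1 ψ (x, t) →
      IsLocalMax (fun q : Vec N × ℝ => u q.1 q.2 - ψ q) (x, t) →
      deriv (fun s => ψ (x, s)) t + G x (gradient (fun y => ψ (y, t)) x) t ≤ 0)
    (hsup : ∀ (x : Vec N) (t : ℝ), 0 < t → t < T → ∀ ψ : Vec N × ℝ → ℝ,
      ContDiffAt ℝ 1 ψ (x, t) →
      IsLocalMin (fun q : Vec N × ℝ => v q.1 q.2 - ψ q) (x, t) →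
      0 ≤ deriv (fun s => ψ (x, s)) t + G x (gradient (fun y => ψ (y, t)) x) t)
    (C₀ : ℝ) (hC₀1 : 1 ≤ C₀)
    (hbnd : ∀ x : Vec N, ∀ t ∈ Icc (0:ℝ) T, ∀ y : Vec N, ∀ s ∈ Icc (0:ℝ) T,
      u x t - v y s ≤ 2*C₀ ∧ -(2*C₀) ≤ u x t - v y s)
    (M₀ : ℝ) (hM₀ : ∀ z : Vec N, u z 0 - v z 0 ≤ M₀) (hM₀0 : 0 ≤ M₀)
    (K : ℝ) (hK0 : 0 < K)
    (hKlip : (∀ t ∈ Icc (0:ℝ) T, ∀ x y : Vec N, |u x t - u y t| ≤ K * ‖x - y‖) ∨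
             (∀ t ∈ Icc (0:ℝ) T, ∀ x y : Vec N, |v x t - v y t| ≤ K * ‖x - y‖))
    (ε : ℝ) (hε : 0 < ε) :
    ∀ x : Vec N, ∀ t ∈ Ico (0:ℝ) T,
      u x t - v x t ≤ M₀ + ε * (1 + t + 1/(T - t)) := by
  have h0T : (0:ℝ) ∈ Icc (0:ℝ) T := ⟨le_refl _, hT.le⟩
  set P : ℝ := 4*C₀ + ε/T + 1 with hPdef
  have hεT : 0 ≤ ε/T := by positivity
  have hP1 : 1 ≤ P := by simp only [hPdef]; linarith
  have hP0 : 0 < P := by linarith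
  clear_value P
  set τ : ℝ := min (T/2) (ε/P) with hτdef
  have hτ0 : 0 < τ := by rw [hτdef]; exact lt_min (by linarith) (div_pos hε hP0)
  have hτT2 : τ ≤ T/2 := by rw [hτdef]; exact min_le_left _ _
  have hτle : τ ≤ ε/P := by rw [hτdef]; exact min_le_right _ _
  clear_value τ
  have hτP : P ≤ ε/τ := by
    rw [le_div_iff₀ hτ0]
    have h1 : τ ≤ ε/P := hτle
    have := mul_le_mul_of_nonneg_left h1 hP0.le
    rwa [mul_div_cancel₀ _ (ne_of_gt hP0)] at this
  set T' : ℝ := T - τ/2 with hT'def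
  clear_value T'
  have hT'0 : 0 ≤ T' := by simp only [hT'def]; linarith
  have hT'T : T' < T := by simp only [hT'def]; linarith
  set RN : ℝ := Real.sqrt N with hRNdef
  have hRN : 0 ≤ RN := by rw [hRNdef]; exact Real.sqrt_nonneg _
  clear_value RN
  have hsP : 0 ≤ Real.sqrt P := Real.sqrt_nonneg _
  set R : ℝ := RN + Real.sqrt P + 3 with hRdef
  clear_value R
  have hR0 : 0 < R := by rw [hRdef]; linarith
  -- moduli of continuity
  have hIccT : Icc (0:ℝ) T' ⊆ Icc (0:ℝ) T := Icc_subset_Icc le_rfl (by linarith)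
  have modUV : ∀ w : Vec N → ℝ → ℝ,
      ContinuousOn (fun q : Vec N × ℝ => w q.1 q.2) (univ ×ˢ Icc 0 T) →
      ∃ d : ℝ, 0 < d ∧ ∀ a b : Vec N × ℝ,
        a ∈ Metric.closedBall (0 : Vec N) R ×ˢ Icc (0:ℝ) T →
        b ∈ Metric.closedBall (0 : Vec N) R ×ˢ Icc (0:ℝ) T →
        dist a b < d → |w a.1 a.2 - w b.1 b.2| < ε := by
    intro w hwc
    have hcomp : IsCompact (Metric.closedBall (0 : Vec N) R ×ˢ Icc (0:ℝ) T) :=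
      (isCompact_closedBall _ _).prod isCompact_Icc
    have huc' := hcomp.uniformContinuousOn_of_continuous
      (hwc.mono (fun q hq => ⟨trivial, hq.2⟩))
    rw [Metric.uniformContinuousOn_iff] at huc'
    obtain ⟨d, hd0, hd⟩ := huc' ε hε
    exact ⟨d, hd0, fun a b ha hb hab => by
      have := hd a ha b hb hab; rwa [Real.dist_eq] at this⟩
  obtain ⟨du, hdu0, hdu⟩ := modUV u huc
  obtain ⟨dv, hdv0, hdv⟩ := modUV v hvc
  -- modulus for G
  obtain ⟨dG, hdG0, hdG⟩ : ∃ d : ℝ, 0 < d ∧ ∀ a b : Vec N × Vec N × ℝ,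
      a ∈ Metric.closedBall (0 : Vec N) R ×ˢ Metric.closedBall (0 : Vec N) (2*K) ×ˢ Icc (0:ℝ) T →
      b ∈ Metric.closedBall (0 : Vec N) R ×ˢ Metric.closedBall (0 : Vec N) (2*K) ×ˢ Icc (0:ℝ) T →
      dist a b < d → |G a.1 a.2.1 a.2.2 - G b.1 b.2.1 b.2.2| < ε := by
    have hcomp : IsCompact (Metric.closedBall (0 : Vec N) R ×ˢ
        Metric.closedBall (0 : Vec N) (2*K) ×ˢ Icc (0:ℝ) T) :=
      (isCompact_closedBall _ _).prod ((isCompact_closedBall _ _).prod isCompact_Icc)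
    have huc' := hcomp.uniformContinuousOn_of_continuous
      (hGc.mono (fun q hq => ⟨trivial, trivial, hq.2.2⟩))
    rw [Metric.uniformContinuousOn_iff] at huc'
    obtain ⟨d, hd0, hd⟩ := huc' ε hε
    exact ⟨d, hd0, fun a b ha hb hab => by
      have := hd a ha b hb hab; rwa [Real.dist_eq] at this⟩
  set r : ℝ := min (min du dv) (min dG (τ/4)) with hrdef
  have hr0 : 0 < r := by
    rw [hrdef]; exact lt_min (lt_min hdu0 hdv0) (lt_min hdG0 (by linarith))
  have hrdu : r ≤ du := by rw [hrdef]; exact le_trans (min_le_left _ _) (min_le_left _ _)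
  have hrdv : r ≤ dv := by rw [hrdef]; exact le_trans (min_le_left _ _) (min_le_right _ _)
  have hrdG : r ≤ dG := by rw [hrdef]; exact le_trans (min_le_right _ _) (min_le_left _ _)
  have hrτ : r ≤ τ/4 := by rw [hrdef]; exact le_trans (min_le_right _ _) (min_le_right _ _)
  clear_value r
  set δ : ℝ := min 1 (r^2/(2*P)) with hδdef
  have hδ0 : 0 < δ := by rw [hδdef]; exact lt_min one_pos (by positivity)
  have hδ1 : δ ≤ 1 := by rw [hδdef]; exact min_le_left _ _
  have hδle : δ ≤ r^2/(2*P) := by rw [hδdef]; exact min_le_right _ _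
  clear_value δ
  set sδ : ℝ := Real.sqrt (δ*P) with hsδdef
  have hsδ0 : 0 ≤ sδ := by rw [hsδdef]; exact Real.sqrt_nonneg _
  clear_value sδ
  have hsδr : sδ < r := by
    rw [hsδdef, show r = Real.sqrt (r^2) by rw [Real.sqrt_sq hr0.le]]
    apply Real.sqrt_lt_sqrt (by positivity)
    have h1 : δ ≤ r^2/(2*P) := hδle
    have h2 : δ * P ≤ (r^2/(2*P)) * P := mul_le_mul_of_nonneg_right h1 hP0.le
    have h3 : (r^2/(2*P)) * P = r^2/2 := by field_simp
    have h4 : 0 < r^2 := by positivity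
    rw [h3] at h2
    linarith only [h2, h4]
  have hsδP : sδ ≤ Real.sqrt P := by
    rw [hsδdef]
    apply Real.sqrt_le_sqrt
    calc δ * P ≤ 1 * P := mul_le_mul_of_nonneg_right hδ1 hP0.le
      _ = P := one_mul P
  -- the doubled function and its domain
  set Φ : (Vec N × Vec N) × ℝ × ℝ → ℝ := fun z =>
    u z.1.1 z.2.1 - v z.1.2 z.2.2 - ‖z.1.1 - z.1.2‖^2/δ - (z.2.1 - z.2.2)^2/δ
      - ε*z.2.1 - ε/(T - z.2.1) with hΦdef
  set S : Set ((Vec N × Vec N) × ℝ × ℝ) :=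
    (Metric.closedBall 0 R ×ˢ Metric.closedBall 0 R) ×ˢ (Icc 0 T' ×ˢ Icc 0 T') with hSdef
  clear_value Φ S
  have hmemS : ∀ (a b : Vec N) (s t : ℝ), ((a,b),(s,t)) ∈ S ↔
      (‖a‖ ≤ R ∧ ‖b‖ ≤ R ∧ s ∈ Icc (0:ℝ) T' ∧ t ∈ Icc (0:ℝ) T') := by
    intro a b s t
    rw [hSdef]
    simp only [Set.mem_prod, Set.mem_Icc, mem_closedBall_zero_iff]
    tauto
  have hScomp : IsCompact S := by
    rw [hSdef]
    exact ((isCompact_closedBall _ _).prod (isCompact_closedBall _ _)).prod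
      (isCompact_Icc.prod isCompact_Icc)
  have hSne : S.Nonempty := ⟨((0,0),(0,0)), by
    rw [hmemS]; refine ⟨by simp [hR0.le], by simp [hR0.le], ⟨le_refl _, hT'0⟩, ⟨le_refl _, hT'0⟩⟩⟩
  have hStime : ∀ z ∈ S, z.2.1 ∈ Icc (0:ℝ) T' ∧ z.2.2 ∈ Icc (0:ℝ) T' ∧
      ‖z.1.1‖ ≤ R ∧ ‖z.1.2‖ ≤ R := by
    intro z hz
    obtain ⟨⟨a,b⟩,s,t⟩ := z
    rw [hmemS] at hz
    exact ⟨hz.2.2.1, hz.2.2.2, hz.1, hz.2.1⟩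
  have hΦc : ContinuousOn Φ S := by
    have huS : ContinuousOn (fun z : (Vec N × Vec N) × ℝ × ℝ => u z.1.1 z.2.1) S := by
      have hmap : MapsTo (fun z : (Vec N × Vec N) × ℝ × ℝ => ((z.1.1, z.2.1) : Vec N × ℝ))
          S (univ ×ˢ Icc 0 T) := fun z hz => ⟨trivial, hIccT (hStime z hz).1⟩
      exact huc.comp (Continuous.continuousOn (by fun_prop)) hmap
    have hvS : ContinuousOn (fun z : (Vec N × Vec N) × ℝ × ℝ => v z.1.2 z.2.2) S := by
      have hmap : MapsTo (fun z : (Vec N × Vec N) × ℝ × ℝ => ((z.1.2, z.2.2) : Vec N × ℝ))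
          S (univ ×ˢ Icc 0 T) := fun z hz => ⟨trivial, hIccT (hStime z hz).2.1⟩
      exact hvc.comp (Continuous.continuousOn (by fun_prop)) hmap
    rw [hΦdef]
    apply ContinuousOn.sub
    apply ContinuousOn.sub
    apply ContinuousOn.sub
    apply ContinuousOn.sub
    apply ContinuousOn.sub
    · exact huS
    · exact hvS
    · exact Continuous.continuousOn (by fun_prop)
    · exact Continuous.continuousOn (by fun_prop)
    · exact Continuous.continuousOn (by fun_prop)
    · apply ContinuousOn.div continuousOn_const (Continuous.continuousOn (by fun_prop))
      intro z hz
      have := (hStime z hz).1.2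
      have : z.2.1 < T := lt_of_le_of_lt this hT'T
      exact ne_of_gt (by linarith)
  obtain ⟨z₀, hz₀S, hmax₀⟩ := hScomp.exists_isMaxOn hSne hΦc
  obtain ⟨⟨xO, yO⟩, tb, sb⟩ := z₀
  rw [isMaxOn_iff] at hmax₀
  rw [hmemS] at hz₀S
  obtain ⟨hxOR, hyOR, htb, hsb⟩ := hz₀S
  have htbT : tb < T := lt_of_le_of_lt htb.2 hT'T
  have hsbT : sb < T := lt_of_le_of_lt hsb.2 hT'T
  set M : ℝ := Φ ((xO,yO),(tb,sb)) with hMdef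
  clear_value M
  -- lower bound on M
  have hMlow : -(2*C₀) - ε/T ≤ M := by
    have h0S : (((0,0),(0,0)) : (Vec N × Vec N) × ℝ × ℝ) ∈ S := by
      rw [hmemS]
      exact ⟨by simp [hR0.le], by simp [hR0.le], ⟨le_refl _, hT'0⟩, ⟨le_refl _, hT'0⟩⟩
    have h1 := hmax₀ _ h0S
    have h2 : Φ ((0,0),(0,0)) = u 0 0 - v 0 0 - ε/T := by
      simp [hΦdef]
    rw [h2] at h1
    have h3 := (hbnd 0 0 h0T 0 0 h0T).2
    linarith only [h1, h3]
  -- upper bound / penalty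
  have hT0tb : 0 < T - tb := by linarith
  have hεtb : 0 ≤ ε*tb := mul_nonneg hε.le htb.1
  have hεTtb : 0 ≤ ε/(T - tb) := by positivity
  have hMup : M ≤ u xO tb - v yO sb - ‖xO - yO‖^2/δ - (tb - sb)^2/δ := by
    simp only [hMdef, hΦdef]
    linarith only [hεtb, hεTtb]
  have hpen : ‖xO - yO‖^2/δ + (tb - sb)^2/δ ≤ P := by
    have h1 := (hbnd xO tb (hIccT htb) yO sb (hIccT hsb)).1
    simp only [hPdef]
    linarith only [h1, hMlow, hMup]
  have hpen1 : ‖xO - yO‖^2/δ ≤ P := by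
    have h : 0 ≤ (tb - sb)^2/δ := by positivity
    linarith only [h, hpen]
  have hpen2 : (tb - sb)^2/δ ≤ P := by
    have h : 0 ≤ ‖xO - yO‖^2/δ := by positivity
    linarith only [h, hpen]
  have hxy : ‖xO - yO‖ ≤ sδ := by
    rw [hsδdef, show ‖xO - yO‖ = Real.sqrt (‖xO - yO‖^2) by rw [Real.sqrt_sq (norm_nonneg _)]]
    apply Real.sqrt_le_sqrt
    rw [div_le_iff₀ hδ0] at hpen1
    linarith only [hpen1]
  have hts : |tb - sb| ≤ sδ := by
    rw [hsδdef, show |tb - sb| = Real.sqrt ((tb - sb)^2) by rw [Real.sqrt_sq_eq_abs]]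
    apply Real.sqrt_le_sqrt
    rw [div_le_iff₀ hδ0] at hpen2
    linarith only [hpen2]
  -- tb is away from T
  have htbτ : tb ≤ T - τ := by
    by_contra hcon
    push_neg at hcon
    have h1 : T - tb < τ := by linarith
    have h2 : ε/τ < ε/(T - tb) := by
      apply div_lt_div_of_pos_left hε hT0tb h1
    have h3 := (hbnd xO tb (hIccT htb) yO sb (hIccT hsb)).1
    have h4 : 0 ≤ ‖xO - yO‖^2/δ := by positivity
    have h5 : 0 ≤ (tb - sb)^2/δ := by positivity
    have h6 : M ≤ 2*C₀ - ε/(T - tb) := by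
      simp only [hMdef, hΦdef]; linarith only [h3, h4, h5, hεtb]
    have h7 : P ≤ ε/(T - tb) := by linarith only [hτP, h2]
    simp only [hPdef] at h7
    linarith only [h6, h7, hMlow]
  -- translate into the fundamental domain
  obtain ⟨k, hk⟩ := cube_reduce xO
  set xb : Vec N := xO + intVec k with hxbdef
  set yb : Vec N := yO + intVec k with hybdef
  clear_value xb yb
  have hsubxy : xb - yb = xO - yO := by
    rw [hxbdef, hybdef]; abel
  have hxybn : ‖xb - yb‖ ≤ sδ := by rw [hsubxy]; exact hxy
  have hxbR : ‖xb‖ ≤ RN := by rw [hRNdef]; exact hk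
  have hybR : ‖yb‖ ≤ RN + sδ := by
    have : yb = xb - (xb - yb) := by abel
    rw [this]
    calc ‖xb - (xb - yb)‖ ≤ ‖xb‖ + ‖xb - yb‖ := norm_sub_le _ _
      _ ≤ RN + sδ := add_le_add hxbR hxybn
  have hxbR' : ‖xb‖ ≤ R := by rw [hRdef]; linarith
  have hybR' : ‖yb‖ ≤ R := by
    rw [hRdef]; linarith [le_trans hybR (by linarith [hsδP] : RN + sδ ≤ RN + Real.sqrt P)]
  have hu_per := hup tb xO k
  have hv_per := hvp sb yO k
  simp only at hu_per hv_per
  have hΦtrans : Φ ((xb,yb),(tb,sb)) = M := by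
    simp only [hMdef, hΦdef, hxbdef, hybdef]
    rw [show xO + intVec k - (yO + intVec k) = xO - yO by abel, hu_per, hv_per]
  have hzbS : ((xb,yb),(tb,sb)) ∈ S := by
    rw [hmemS]; exact ⟨hxbR', hybR', htb, hsb⟩
  have hmaxM : ∀ w ∈ S, Φ w ≤ M := hmax₀
  -- Lipschitz bound on the doubling distance
  have hxyδ : ‖xb - yb‖ ≤ K * δ := by
    rcases hKlip with hKu | hKv
    · have hmem : ((yb,yb),(tb,sb)) ∈ S := by
        rw [hmemS]; exact ⟨hybR', hybR', htb, hsb⟩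
      have h1 := hmaxM _ hmem
      rw [← hΦtrans] at h1
      simp only [hΦdef] at h1
      simp only [sub_self, norm_zero, ne_eq, OfNat.ofNat_ne_zero, not_false_eq_true,
        zero_pow, zero_div, sub_zero] at h1
      have h2 : ‖xb - yb‖^2/δ ≤ u xb tb - u yb tb := by linarith only [h1]
      have h3 := hKu tb (hIccT htb) xb yb
      have h4 : u xb tb - u yb tb ≤ K * ‖xb - yb‖ := le_trans (le_abs_self _) h3
      have h5 : ‖xb - yb‖^2 ≤ K * ‖xb - yb‖ * δ := by
        rw [div_le_iff₀ hδ0] at h2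
        nlinarith only [h2, h4, hδ0]
      by_contra hcon
      push_neg at hcon
      have hn0 : 0 < ‖xb - yb‖ := lt_trans (mul_pos hK0 hδ0) hcon
      have hprod := mul_lt_mul_of_pos_right hcon hn0
      nlinarith only [h5, hprod]
    · have hmem : ((xb,xb),(tb,sb)) ∈ S := by
        rw [hmemS]; exact ⟨hxbR', hxbR', htb, hsb⟩
      have h1 := hmaxM _ hmem
      rw [← hΦtrans] at h1
      simp only [hΦdef] at h1
      simp only [sub_self, norm_zero, ne_eq, OfNat.ofNat_ne_zero, not_false_eq_true,
        zero_pow, zero_div, sub_zero] at h1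
      have h2 : ‖xb - yb‖^2/δ ≤ v xb sb - v yb sb := by linarith only [h1]
      have h3 := hKv sb (hIccT hsb) xb yb
      have h4 : v xb sb - v yb sb ≤ K * ‖xb - yb‖ := le_trans (le_abs_self _) h3
      have h5 : ‖xb - yb‖^2 ≤ K * ‖xb - yb‖ * δ := by
        rw [div_le_iff₀ hδ0] at h2
        nlinarith only [h2, h4, hδ0]
      by_contra hcon
      push_neg at hcon
      have hn0 : 0 < ‖xb - yb‖ := lt_trans (mul_pos hK0 hδ0) hcon
      have hprod := mul_lt_mul_of_pos_right hcon hn0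
      nlinarith only [h5, hprod]
  set p : Vec N := (2/δ) • (xb - yb) with hpdef
  clear_value p
  have hpnorm : ‖p‖ ≤ 2*K := by
    rw [hpdef, norm_smul, Real.norm_eq_abs, abs_of_pos (by positivity : (0:ℝ) < 2/δ)]
    rw [div_mul_eq_mul_div, div_le_iff₀ hδ0]
    linarith only [hxyδ]
  -- the main dichotomy
  have hMM₀ : M ≤ M₀ + ε := by
    rcases eq_or_lt_of_le htb.1 with htb0 | htbpos
    · -- tb = 0
      have htb0' : tb = 0 := htb0.symm
      subst htb0'
      have hsb' : |sb| ≤ sδ := by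
        rw [show |sb| = |(0:ℝ) - sb| by rw [zero_sub, abs_neg]]
        exact hts
      have hv2 : |v xO 0 - v yO sb| < ε := by
        have ha : ((xO, (0:ℝ)) : Vec N × ℝ) ∈ Metric.closedBall (0:Vec N) R ×ˢ Icc (0:ℝ) T :=
          ⟨by simpa [mem_closedBall_zero_iff] using hxOR, h0T⟩
        have hb : ((yO, sb) : Vec N × ℝ) ∈ Metric.closedBall (0:Vec N) R ×ˢ Icc (0:ℝ) T :=
          ⟨by simpa [mem_closedBall_zero_iff] using hyOR, hIccT hsb⟩
        apply hdv _ _ ha hb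
        rw [Prod.dist_eq]
        apply max_lt
        · rw [dist_eq_norm]; exact lt_of_le_of_lt hxy hsδr |>.trans_le hrdv
        · rw [Real.dist_eq, show |(0:ℝ) - sb| = |sb| by rw [zero_sub, abs_neg]]
          exact lt_of_le_of_lt hsb' hsδr |>.trans_le hrdv
      have h1 : M ≤ u xO 0 - v yO sb := by
        have h4 : 0 ≤ ‖xO - yO‖^2/δ := by positivity
        have h5 : 0 ≤ (0 - sb)^2/δ := by positivity
        linarith only [hMup, h4, h5]
      have h2 := hM₀ xO
      have h3 : v xO 0 - v yO sb < ε := lt_of_le_of_lt (le_abs_self _) hv2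
      linarith only [h1, h2, h3]
    · rcases eq_or_lt_of_le hsb.1 with hsb0 | hsbpos
      · -- sb = 0
        have hsb0' : sb = 0 := hsb0.symm
        subst hsb0'
        have htb' : |tb| ≤ sδ := by
          rw [show |tb| = |tb - 0| by rw [sub_zero]]
          exact hts
        have hu2 : |u xO tb - u yO 0| < ε := by
          have ha : ((xO, tb) : Vec N × ℝ) ∈ Metric.closedBall (0:Vec N) R ×ˢ Icc (0:ℝ) T :=
            ⟨by simpa [mem_closedBall_zero_iff] using hxOR, hIccT htb⟩
          have hb : ((yO, (0:ℝ)) : Vec N × ℝ) ∈ Metric.closedBall (0:Vec N) R ×ˢ Icc (0:ℝ) T :=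
            ⟨by simpa [mem_closedBall_zero_iff] using hyOR, h0T⟩
          apply hdu _ _ ha hb
          rw [Prod.dist_eq]
          apply max_lt
          · rw [dist_eq_norm]; exact lt_of_le_of_lt hxy hsδr |>.trans_le hrdu
          · rw [Real.dist_eq, sub_zero]
            exact lt_of_le_of_lt htb' hsδr |>.trans_le hrdu
        have h1 : M ≤ u xO tb - v yO 0 := by
          have h4 : 0 ≤ ‖xO - yO‖^2/δ := by positivity
          have h5 : 0 ≤ (tb - 0)^2/δ := by positivity
          linarith only [hMup, h4, h5]
        have h2 := hM₀ yO
        have h3 : u xO tb - u yO 0 < ε := lt_of_le_of_lt (le_abs_self _) hu2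
        linarith only [h1, h2, h3]
      · -- interior case: contradiction via viscosity
        exfalso
        -- subsolution test
        set ψ : Vec N × ℝ → ℝ := fun q =>
          v yb sb + ‖q.1 - yb‖^2/δ + (q.2 - sb)^2/δ + ε*q.2 + ε/(T - q.2) with hψdef
        clear_value ψ
        have hψc1 : ContDiffAt ℝ 1 ψ (xb, tb) := by
          rw [hψdef]
          have h1 : ContDiff ℝ 1 fun q : Vec N × ℝ => ‖q.1 - yb‖^2/δ :=
            ((contDiff_norm_sq ℝ).comp (contDiff_fst.sub contDiff_const)).div_const δ
          have h2 : ContDiff ℝ 1 fun q : Vec N × ℝ => (q.2 - sb)^2/δ :=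
            ((contDiff_snd.sub contDiff_const).pow 2).div_const δ
          have h3 : ContDiff ℝ 1 fun q : Vec N × ℝ => ε*q.2 :=
            contDiff_const.mul contDiff_snd
          have h4 : ContDiffAt ℝ 1 (fun q : Vec N × ℝ => ε/(T - q.2)) (xb, tb) := by
            apply ContDiffAt.div contDiffAt_const
            · exact (contDiffAt_const.sub (contDiff_snd.contDiffAt))
            · exact ne_of_gt (by simpa using hT0tb)
          exact (((contDiffAt_const.add h1.contDiffAt).add h2.contDiffAt).add
            h3.contDiffAt).add h4
        have hloc : IsLocalMax (fun q : Vec N × ℝ => u q.1 q.2 - ψ q) (xb, tb) := by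
          set ρ : ℝ := min 1 (min tb (τ/2)) with hρdef
          have hρ0 : 0 < ρ := by rw [hρdef]; exact lt_min one_pos (lt_min htbpos (by linarith))
          have hρ1 : ρ ≤ 1 := by rw [hρdef]; exact min_le_left _ _
          have hρtb : ρ ≤ tb := by rw [hρdef]; exact le_trans (min_le_right _ _) (min_le_left _ _)
          have hρτ : ρ ≤ τ/2 := by rw [hρdef]; exact le_trans (min_le_right _ _) (min_le_right _ _)
          clear_value ρ
          filter_upwards [Metric.ball_mem_nhds (xb, tb) hρ0] with q hq
          rw [Metric.mem_ball, Prod.dist_eq, max_lt_iff] at hq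
          dsimp only at hq
          obtain ⟨hq1, hq2⟩ := hq
          rw [dist_eq_norm] at hq1
          rw [Real.dist_eq] at hq2
          have habs := abs_lt.mp hq2
          have hmemq : ((q.1, yb), (q.2, sb)) ∈ S := by
            rw [hmemS]
            have hq20 : (0:ℝ) ≤ q.2 := by linarith only [habs.1, hρtb]
            have hq2T : q.2 ≤ T' := by
              rw [hT'def]; linarith only [habs.2, hρτ, htbτ]
            refine ⟨?_, hybR', ⟨hq20, hq2T⟩, hsb⟩
            calc ‖q.1‖ = ‖xb + (q.1 - xb)‖ := by rw [add_sub_cancel]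
              _ ≤ ‖xb‖ + ‖q.1 - xb‖ := norm_add_le _ _
              _ ≤ RN + 1 := add_le_add hxbR (by linarith)
              _ ≤ R := by rw [hRdef]; linarith
          have h1 := hmaxM _ hmemq
          rw [← hΦtrans] at h1
          simp only [hΦdef, hψdef] at h1 ⊢
          linarith only [h1]
        have hres1 := hsub xb tb htbpos htbT ψ hψc1 hloc
        have hd1 : deriv (fun s => ψ (xb, s)) tb = 2*(tb-sb)/δ + ε + ε/(T-tb)^2 := by
          simp only [hψdef]
          exact deriv_psi T ε sb (‖xb - yb‖^2/δ) (v yb sb) δ tb (ne_of_lt htbT)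
        have hg1 : gradient (fun y => ψ (y, tb)) xb = p := by
          simp only [hψdef]
          rw [hpdef]
          exact (hasGradientAt_psi (v yb sb) ((tb - sb)^2/δ) (ε*tb) (ε/(T - tb)) δ yb xb).gradient
        rw [hd1, hg1] at hres1
        -- supersolution test
        set ψ2 : Vec N × ℝ → ℝ := fun q =>
          u xb tb - ‖xb - q.1‖^2/δ - (tb - q.2)^2/δ - ε*tb - ε/(T - tb) with hψ2def
        clear_value ψ2
        have hψ2c1 : ContDiffAt ℝ 1 ψ2 (yb, sb) := by
          rw [hψ2def]
          have h1 : ContDiff ℝ 1 fun q : Vec N × ℝ => ‖xb - q.1‖^2/δ :=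
            ((contDiff_norm_sq ℝ).comp (contDiff_const.sub contDiff_fst)).div_const δ
          have h2 : ContDiff ℝ 1 fun q : Vec N × ℝ => (tb - q.2)^2/δ :=
            ((contDiff_const.sub contDiff_snd).pow 2).div_const δ
          exact ((((contDiff_const.sub h1).sub h2).sub contDiff_const).sub
            contDiff_const).contDiffAt
        have hloc2 : IsLocalMin (fun q : Vec N × ℝ => v q.1 q.2 - ψ2 q) (yb, sb) := by
          set ρ : ℝ := min 1 (min sb (τ/8)) with hρdef
          have hρ0 : 0 < ρ := by rw [hρdef]; exact lt_min one_pos (lt_min hsbpos (by linarith))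
          have hρ1 : ρ ≤ 1 := by rw [hρdef]; exact min_le_left _ _
          have hρsb : ρ ≤ sb := by rw [hρdef]; exact le_trans (min_le_right _ _) (min_le_left _ _)
          have hρτ : ρ ≤ τ/8 := by rw [hρdef]; exact le_trans (min_le_right _ _) (min_le_right _ _)
          clear_value ρ
          have hsbup : sb ≤ tb + sδ := by
            have := abs_le.mp hts; linarith [this.1]
          have hsδτ : sδ ≤ τ/4 := le_trans hsδr.le hrτ
          filter_upwards [Metric.ball_mem_nhds (yb, sb) hρ0] with q hq
          rw [Metric.mem_ball, Prod.dist_eq, max_lt_iff] at hq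
          dsimp only at hq
          obtain ⟨hq1, hq2⟩ := hq
          rw [dist_eq_norm] at hq1
          rw [Real.dist_eq] at hq2
          have habs := abs_lt.mp hq2
          have hmemq : ((xb, q.1), (tb, q.2)) ∈ S := by
            rw [hmemS]
            have hq20 : (0:ℝ) ≤ q.2 := by linarith only [habs.1, hρsb]
            refine ⟨hxbR', ?_, htb, ⟨hq20, ?_⟩⟩
            · calc ‖q.1‖ = ‖yb + (q.1 - yb)‖ := by rw [add_sub_cancel]
                _ ≤ ‖yb‖ + ‖q.1 - yb‖ := norm_add_le _ _
                _ ≤ (RN + sδ) + 1 := add_le_add hybR (by linarith)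
                _ ≤ R := by rw [hRdef]; linarith [hsδP]
            · -- q.2 ≤ T'
              rw [hT'def]
              linarith only [habs.2, hρτ, htbτ, hsbup, hsδτ, hτ0]
          have h1 := hmaxM _ hmemq
          rw [← hΦtrans] at h1
          simp only [hΦdef, hψ2def] at h1 ⊢
          linarith only [h1]
        have hres2 := hsup yb sb hsbpos hsbT ψ2 hψ2c1 hloc2
        have hd2 : deriv (fun s => ψ2 (yb, s)) sb = 2*(tb-sb)/δ := by
          simp only [hψ2def]
          exact deriv_psi2 (u xb tb) (‖xb - yb‖^2/δ) (ε*tb) (ε/(T - tb)) δ tb sb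
        have hg2 : gradient (fun y => ψ2 (y, sb)) yb = p := by
          simp only [hψ2def]
          rw [hpdef]
          exact (hasGradientAt_psi2 (u xb tb) ((tb - sb)^2/δ) (ε*tb) (ε/(T - tb)) δ xb yb).gradient
        rw [hd2, hg2] at hres2
        -- G modulus
        have hGm : |G yb p sb - G xb p tb| < ε := by
          have hpmem : p ∈ Metric.closedBall (0:Vec N) (2*K) := by
            rw [mem_closedBall_zero_iff]; exact hpnorm
          have ha : ((yb, p, sb) : Vec N × Vec N × ℝ) ∈ Metric.closedBall (0:Vec N) R ×ˢ
              Metric.closedBall (0:Vec N) (2*K) ×ˢ Icc (0:ℝ) T := by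
            exact ⟨by rwa [mem_closedBall_zero_iff], hpmem, hIccT hsb⟩
          have hb : ((xb, p, tb) : Vec N × Vec N × ℝ) ∈ Metric.closedBall (0:Vec N) R ×ˢ
              Metric.closedBall (0:Vec N) (2*K) ×ˢ Icc (0:ℝ) T := by
            exact ⟨by rwa [mem_closedBall_zero_iff], hpmem, hIccT htb⟩
          apply hdG _ _ ha hb
          rw [Prod.dist_eq, Prod.dist_eq]
          apply max_lt
          · rw [dist_eq_norm, norm_sub_rev]
            exact lt_of_le_of_lt hxybn hsδr |>.trans_le hrdG
          · apply max_lt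
            · simpa using lt_of_lt_of_le hr0 hrdG
            · rw [Real.dist_eq, abs_sub_comm]
              exact lt_of_le_of_lt hts hsδr |>.trans_le hrdG
        have hpos : 0 < ε/(T-tb)^2 := by positivity
        have h9 := abs_lt.mp hGm
        linarith only [h9.1, h9.2, hres1, hres2, hpos]
  -- conclude the step, for an arbitrary (x, t)
  intro x t ht
  have hTt : 0 < T - t := by linarith [ht.2]
  by_cases hcase : t ≤ T'
  · obtain ⟨k', hk'⟩ := cube_reduce x
    have hmem : ((x + intVec k', x + intVec k'), (t, t)) ∈ S := by
      rw [hmemS]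
      have h1 : ‖x + intVec k'‖ ≤ R := by
        refine le_trans hk' ?_; rw [hRdef, hRNdef]; linarith [Real.sqrt_nonneg (N:ℝ), Real.sqrt_nonneg P]
      exact ⟨h1, h1, ⟨ht.1, hcase⟩, ⟨ht.1, hcase⟩⟩
    have h1 := hmaxM _ hmem
    have h2 : Φ ((x + intVec k', x + intVec k'), (t, t))
        = u x t - v x t - ε*t - ε/(T - t) := by
      simp only [hΦdef]
      have hu' := hup t x k'
      have hv' := hvp t x k'
      simp only at hu' hv'
      rw [hu', hv', sub_self, norm_zero, sub_self]
      norm_num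
    rw [h2] at h1
    have h3 : ε * (1 + t + 1/(T - t)) = ε + ε*t + ε/(T - t) := by
      field_simp
    linarith only [h1, h3, hMM₀]
  · push_neg at hcase
    have h1 : T - t < τ/2 := by simp only [hT'def] at hcase; linarith
    have h2 : ε/(τ/2) ≤ ε/(T - t) := by
      apply div_le_div_of_nonneg_left hε.le hTt (by linarith)
    have h3 : ε/(τ/2) = 2*(ε/τ) := by
      rw [div_div_eq_mul_div]; ring
    have h4 : 2*P ≤ ε/(T - t) := by
      rw [h3] at h2
      linarith only [h2, hτP]
    have h5 := (hbnd x t (Ico_subset_Icc_self ht) x t (Ico_subset_Icc_self ht)).1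
    have h6 : ε * (1 + t + 1/(T - t)) = ε + ε*t + ε/(T - t) := by
      field_simp
    have h7 : 0 ≤ ε*t := mul_nonneg hε.le ht.1
    simp only [hPdef] at h4
    have h8 : 0 ≤ ε/T := by positivity
    linarith only [h4, h5, h6, h7, h8, hM₀0, hC₀1, hε.le]


lemma comparison_key {N : ℕ} (T : ℝ) (hT : 0 < T)
    (G : Vec N → Vec N → ℝ → ℝ)
    (hGc : ContinuousOn (fun q : Vec N × Vec N × ℝ => G q.1 q.2.1 q.2.2)
      (univ ×ˢ univ ×ˢ Icc 0 T))
    (u v : Vec N → ℝ → ℝ)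
    (huc : ContinuousOn (fun q : Vec N × ℝ => u q.1 q.2) (univ ×ˢ Icc 0 T))
    (hvc : ContinuousOn (fun q : Vec N × ℝ => v q.1 q.2) (univ ×ˢ Icc 0 T))
    (hup : ∀ t, ZPeriodic fun x => u x t)
    (hvp : ∀ t, ZPeriodic fun x => v x t)
    (hsub : ∀ (x : Vec N) (t : ℝ), 0 < t → t < T → ∀ ψ : Vec N × ℝ → ℝ,
      ContDiffAt ℝ 1 ψ (x, t) →
      IsLocalMax (fun q : Vec N × ℝ => u q.1 q.2 - ψ q) (x, t) →
      deriv (fun s => ψ (x, s)) t + G x (gradient (fun y => ψ (y, t)) x) t ≤ 0)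
    (hsup : ∀ (x : Vec N) (t : ℝ), 0 < t → t < T → ∀ ψ : Vec N × ℝ → ℝ,
      ContDiffAt ℝ 1 ψ (x, t) →
      IsLocalMin (fun q : Vec N × ℝ => v q.1 q.2 - ψ q) (x, t) →
      0 ≤ deriv (fun s => ψ (x, s)) t + G x (gradient (fun y => ψ (y, t)) x) t)
    (hlip : (∃ K : ℝ, ∀ t ∈ Icc (0:ℝ) T, ∀ x y : Vec N, |u x t - u y t| ≤ K * tdist x y) ∨
            (∃ K : ℝ, ∀ t ∈ Icc (0:ℝ) T, ∀ x y : Vec N, |v x t - v y t| ≤ K * tdist x y)) :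
    ∀ x : Vec N, ∀ t ∈ Icc (0:ℝ) T,
      u x t - v x t ≤ ⨆ z : Vec N, max (u z 0 - v z 0) 0 := by
  obtain ⟨Cu, hCu0, hCu⟩ := bound_of_periodic hT huc hup
  obtain ⟨Cv, hCv0, hCv⟩ := bound_of_periodic hT hvc hvp
  set C₀ : ℝ := Cu + Cv + 1 with hC₀def
  have hC₀1 : 1 ≤ C₀ := by linarith
  have hC₀0 : 0 < C₀ := by linarith
  have hbnd : ∀ x : Vec N, ∀ t ∈ Icc (0:ℝ) T, ∀ y : Vec N, ∀ s ∈ Icc (0:ℝ) T,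
      u x t - v y s ≤ 2*C₀ ∧ -(2*C₀) ≤ u x t - v y s := by
    intro x t ht y s hs
    have h1 := hCu x t ht; have h2 := hCv y s hs
    rw [abs_le] at h1 h2
    constructor <;> linarith
  set M₀ : ℝ := ⨆ z : Vec N, max (u z 0 - v z 0) 0 with hM₀def
  have h0T : (0:ℝ) ∈ Icc (0:ℝ) T := ⟨le_refl _, hT.le⟩
  have hbdd : BddAbove (range fun z : Vec N => max (u z 0 - v z 0) 0) := by
    refine ⟨2*C₀, ?_⟩
    rintro r ⟨z, rfl⟩
    have := (hbnd z 0 h0T z 0 h0T).1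
    simp only
    exact max_le this (by linarith)
  have hM₀ : ∀ z : Vec N, u z 0 - v z 0 ≤ M₀ :=
    fun z => le_trans (le_max_left _ _) (le_ciSup hbdd z)
  have hM₀0 : 0 ≤ M₀ := le_trans (le_max_right (u 0 0 - v 0 0) 0) (le_ciSup hbdd 0)
  -- Lipschitz normalization
  obtain ⟨K, hK0, hKlip⟩ : ∃ K : ℝ, 0 < K ∧
      ((∀ t ∈ Icc (0:ℝ) T, ∀ x y : Vec N, |u x t - u y t| ≤ K * ‖x - y‖) ∨
       (∀ t ∈ Icc (0:ℝ) T, ∀ x y : Vec N, |v x t - v y t| ≤ K * ‖x - y‖)) := by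
    have key : ∀ w : Vec N → ℝ → ℝ, (∃ K : ℝ, ∀ t ∈ Icc (0:ℝ) T, ∀ x y : Vec N,
        |w x t - w y t| ≤ K * tdist x y) → ∃ K : ℝ, 0 < K ∧ ∀ t ∈ Icc (0:ℝ) T,
        ∀ x y : Vec N, |w x t - w y t| ≤ K * ‖x - y‖ := by
      rintro w ⟨K, hK⟩
      refine ⟨max K 0 + 1, by positivity, fun t ht x y => ?_⟩
      have h1 := hK t ht x y
      have h2 := tdist_le' x y
      have h3 := tdist_nonneg'' x y
      have h4 : K ≤ max K 0 + 1 := by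
        have := le_max_left K 0; linarith
      calc |w x t - w y t| ≤ K * tdist x y := h1
        _ ≤ (max K 0 + 1) * tdist x y := mul_le_mul_of_nonneg_right h4 h3
        _ ≤ (max K 0 + 1) * ‖x - y‖ := mul_le_mul_of_nonneg_left h2 (by positivity)
    rcases hlip with h | h
    · obtain ⟨K, hK1, hK2⟩ := key u h; exact ⟨K, hK1, Or.inl hK2⟩
    · obtain ⟨K, hK1, hK2⟩ := key v h; exact ⟨K, hK1, Or.inr hK2⟩
  have step : ∀ ε : ℝ, 0 < ε → ∀ x : Vec N, ∀ t ∈ Ico (0:ℝ) T,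
      u x t - v x t ≤ M₀ + ε * (1 + t + 1/(T - t)) := fun ε hε =>
    comparison_step T hT G hGc u v huc hvc hup hvp hsub hsup C₀ hC₀1 hbnd M₀ hM₀ hM₀0 K hK0 hKlip ε hε
  -- pass to the limit ε → 0
  have hIco : ∀ x : Vec N, ∀ t ∈ Ico (0:ℝ) T, u x t - v x t ≤ M₀ := by
    intro x t ht
    have hTt : 0 < T - t := by linarith [ht.2]
    set c : ℝ := 1 + t + 1/(T - t) with hcdef
    have hc0 : 0 < c := by
      have : 0 < 1/(T - t) := by positivity
      simp only [hcdef]; linarith [ht.1]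
    apply le_of_forall_pos_le_add
    intro ε' hε'
    have := step (ε'/c) (by positivity) x t ht
    calc u x t - v x t ≤ M₀ + (ε'/c) * c := this
      _ = M₀ + ε' := by rw [div_mul_cancel₀ _ (ne_of_gt hc0)]
  intro x t ht
  rcases lt_or_eq_of_le ht.2 with htT | htT
  · exact hIco x t ⟨ht.1, htT⟩
  · subst htT
    have hcont : ContinuousWithinAt (fun s => u x s - v x s) (Ico 0 t) t := by
      have h1 : ContinuousWithinAt (fun q : Vec N × ℝ => u q.1 q.2 - v q.1 q.2)
          (univ ×ˢ Icc 0 t) (x, t) :=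
        ((huc (x, t) ⟨trivial, ht⟩).sub (hvc (x, t) ⟨trivial, ht⟩))
      have h2 : ContinuousWithinAt (fun s : ℝ => ((x, s) : Vec N × ℝ)) (Ico 0 t) t :=
        (Continuous.continuousWithinAt (by fun_prop))
      have h3 := h1.comp h2 (fun s hs => ⟨trivial, Ico_subset_Icc_self hs⟩)
      exact h3
    have hne : (𝓝[Ico (0:ℝ) t] t).NeBot := by
      rw [← mem_closure_iff_nhdsWithin_neBot, closure_Ico (ne_of_lt hT)]
      exact ht
    apply le_of_tendsto hcont.tendsto
    filter_upwards [self_mem_nhdsWithin] with s hs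
    exact hIco x s hs
end Main


/-- Lemma 4.1, comparison: let `T > 0` and `G` continuous; if
`u, v ∈ C(M×[0,T],ℝ)` are respectively a viscosity sub- and supersolution of
`∂ₜu + G(x,∂ₓu,t) = 0` on `M×(0,T)`, and either `u` or `v` is Lipschitz in `x`
uniformly in `t`, then `max_{M×[0,T]} (u−v)⁺ ≤ max_M (u(·,0)−v(·,0))⁺`. -/
theorem statement10 {N : ℕ} (hN : 0 < N) (T : ℝ) (hT : 0 < T)
    (G : Vec N → Vec N → ℝ → ℝ)
    (hGc : ContinuousOn (fun q : Vec N × Vec N × ℝ => G q.1 q.2.1 q.2.2)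
      (univ ×ˢ univ ×ˢ Icc 0 T))
    (hGp : ∀ p t, ZPeriodic fun x => G x p t)
    (u v : Vec N → ℝ → ℝ)
    (huc : ContinuousOn (fun q : Vec N × ℝ => u q.1 q.2) (univ ×ˢ Icc 0 T))
    (hvc : ContinuousOn (fun q : Vec N × ℝ => v q.1 q.2) (univ ×ˢ Icc 0 T))
    (hup : ∀ t, ZPeriodic fun x => u x t)
    (hvp : ∀ t, ZPeriodic fun x => v x t)
    (hsub : ∀ (x : Vec N) (t : ℝ), 0 < t → t < T → ∀ ψ : Vec N × ℝ → ℝ,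
      ContDiffAt ℝ 1 ψ (x, t) →
      IsLocalMax (fun q : Vec N × ℝ => u q.1 q.2 - ψ q) (x, t) →
      deriv (fun s => ψ (x, s)) t + G x (gradient (fun y => ψ (y, t)) x) t ≤ 0)
    (hsup : ∀ (x : Vec N) (t : ℝ), 0 < t → t < T → ∀ ψ : Vec N × ℝ → ℝ,
      ContDiffAt ℝ 1 ψ (x, t) →
      IsLocalMin (fun q : Vec N × ℝ => v q.1 q.2 - ψ q) (x, t) →
      0 ≤ deriv (fun s => ψ (x, s)) t + G x (gradient (fun y => ψ (y, t)) x) t)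
    (hlip : (∃ K : ℝ, ∀ t ∈ Icc (0:ℝ) T, ∀ x y : Vec N, |u x t - u y t| ≤ K * tdist x y) ∨
            (∃ K : ℝ, ∀ t ∈ Icc (0:ℝ) T, ∀ x y : Vec N, |v x t - v y t| ≤ K * tdist x y)) :
    (⨆ q : Vec N × Icc (0:ℝ) T, max (u q.1 (q.2 : ℝ) - v q.1 (q.2 : ℝ)) 0) ≤
      ⨆ x : Vec N, max (u x 0 - v x 0) 0 := by
  have hkey := comparison_key T hT G hGc u v huc hvc hup hvp hsub hsup hlip
  obtain ⟨Cu, hCu0, hCu⟩ := bound_of_periodic hT huc hup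
  obtain ⟨Cv, hCv0, hCv⟩ := bound_of_periodic hT hvc hvp
  have hbdd : BddAbove (range fun z : Vec N => max (u z 0 - v z 0) 0) := by
    refine ⟨Cu + Cv, ?_⟩
    rintro r ⟨z, rfl⟩
    have h1 := hCu z 0 ⟨le_refl _, hT.le⟩
    have h2 := hCv z 0 ⟨le_refl _, hT.le⟩
    rw [abs_le] at h1 h2
    exact max_le (by linarith) (by linarith)
  haveI : Nonempty (Icc (0:ℝ) T) := ⟨⟨0, le_refl _, hT.le⟩⟩
  apply ciSup_le
  rintro ⟨x, t, ht⟩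
  apply max_le
  · exact hkey x t ht
  · exact le_trans (le_max_right (u 0 0 - v 0 0) 0) (le_ciSup hbdd 0)
end
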